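/- arXiv:1311.1451 — 15 statements merged into one kernel-verified Lean document; each statement's English description precedes it below -/
import Mathlib

section
/- The resolvent system over the integers, consisting of the equations x² − y² = x'² + y'² and x·y = x'·y' together with the coprimality conditions gcd(x,y) = 1 and gcd(x',y') = 1, has only trivial solutions: every integer solution (x, y, x', y') satisfies x·y = 0. -/
private lemma abs4 (x : ℤ) : |x| ^ 4 = x ^ 4 := by
  calc |x| ^ 4 = (|x| ^ 2) ^ 2 := by ring
    _ = (x ^ 2) ^ 2 := by rw [sq_abs]
    _ = x ^ 4 := by ring

private lemma sqpos {x : ℤ} (h : x ≠ 0) : 0 < x ^ 2 := by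
  have h1 : 1 ≤ |x| := Int.one_le_abs h
  nlinarith [sq_abs x]

set_option maxHeartbeats 2000000 in
/-- Fermat's right triangle theorem, key descent version. -/
private lemma fermat44_key : ∀ N : ℕ, ∀ a b c : ℤ, a.natAbs = N → 0 < a → 0 < b → 0 < c →
    a ^ 4 - b ^ 4 ≠ c ^ 2 := by
  intro N
  induction N using Nat.strong_induction_on with
  | _ N ih =>
  intro a b c hn ha hb hc heq
  -- a recursion helper allowing arbitrary signs
  have step : ∀ A B C : ℤ, A.natAbs < N → B ≠ 0 → C ≠ 0 → A ^ 4 - B ^ 4 = C ^ 2 → False := by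
    intro A B C hlt hB hC hE
    have hA : A ≠ 0 := by
      rintro rfl
      have h1 : 0 < B ^ 4 := by rw [← abs4]; exact pow_pos (abs_pos.mpr hB) 4
      linarith only [h1, hE, sq_nonneg C]
    refine (ih A.natAbs hlt |A| |B| |C| (Int.natAbs_abs A) (abs_pos.mpr hA)
      (abs_pos.mpr hB) (abs_pos.mpr hC)) ?_
    rw [abs4, abs4, sq_abs]; exact hE
  by_cases hg1 : Int.gcd a b = 1
  · -- coprime case
    have hab : IsCoprime a b := Int.isCoprime_iff_gcd_eq_one.mpr hg1
    -- a is odd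
    have hao : a % 2 = 1 := by
      rcases Int.even_or_odd a with he | ho
      · exfalso
        have hbo : Odd b := by
          rcases Int.even_or_odd b with hb' | hb'
          · exfalso
            have h2 : (2 : ℤ) ∣ Int.gcd a b := Int.dvd_coe_gcd he.two_dvd hb'.two_dvd
            rw [hg1] at h2; norm_num at h2
          · exact hb'
        obtain ⟨k, hk⟩ := he
        obtain ⟨l, hl⟩ := hbo
        have hz : ∀ K L C : ZMod 4, (K + K) ^ 4 - (2 * L + 1) ^ 4 ≠ C ^ 2 := by decide
        rw [hk, hl] at heq
        have hcast := congrArg (fun t : ℤ => (t : ZMod 4)) heq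
        push_cast at hcast
        exact hz k l c hcast
      · exact Int.odd_iff.mp ho
    have hcb : IsCoprime c b := by
      have h1 : IsCoprime (a ^ 4) (b ^ 4) := hab.pow
      rw [show a ^ 4 = c ^ 2 + b ^ 4 * 1 by linear_combination heq] at h1
      have h2 : IsCoprime (c ^ 2) (b ^ 4) := h1.of_add_mul_left_left
      exact (IsCoprime.pow_right_iff (by norm_num)).mp
        ((IsCoprime.pow_left_iff (by norm_num)).mp h2)
    rcases Int.even_or_odd b with hbe | hbo
    · -- b even, c odd : the hard case, double Pythagorean descent
      have hco : c % 2 = 1 := by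
        rcases Int.even_or_odd c with hce | hco
        · exfalso
          have h2 : (2 : ℤ) ∣ Int.gcd c b := Int.dvd_coe_gcd hce.two_dvd hbe.two_dvd
          rw [Int.isCoprime_iff_gcd_eq_one.mp hcb] at h2; norm_num at h2
        · exact Int.odd_iff.mp hco
      have ht : PythagoreanTriple c (b ^ 2) (a ^ 2) := by
        have h0 : c * c + b ^ 2 * b ^ 2 = a ^ 2 * (a ^ 2) := by linear_combination -heq
        exact h0
      have hgcb : Int.gcd c (b ^ 2) = 1 := Int.isCoprime_iff_gcd_eq_one.mp hcb.pow_right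
      obtain ⟨m, n, hcm, hbm, ham, hmn, hpar, hm0⟩ :=
        PythagoreanTriple.coprime_classification' ht hgcb hco (sqpos (ne_of_gt ha))
      have hb2 : 0 < b ^ 2 := sqpos (ne_of_gt hb)
      have hmn0 : 0 < m * n := by linarith only [hb2, hbm]
      have hm : 0 < m := by
        rcases hm0.lt_or_eq with h | h
        · exact h
        · exfalso; rw [← h] at hmn0; simp at hmn0
      have hnpos : 0 < n := by nlinarith only [hm, hmn0]
      obtain ⟨b₁, hb₁⟩ : (2 : ℤ) ∣ b := hbe.two_dvd
      have hmncop : IsCoprime m n := Int.isCoprime_iff_gcd_eq_one.mpr hmn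
      rcases hpar with ⟨hme, hno⟩ | ⟨hmo, hne⟩
      · -- m even, n odd
        obtain ⟨m₁, hm₁⟩ : (2 : ℤ) ∣ m := (Int.even_iff.mpr hme).two_dvd
        have hb1 : m₁ * n = b₁ ^ 2 := by
          have h4 : (4 : ℤ) * (m₁ * n) = 4 * (b₁ ^ 2) := by
            rw [hb₁, hm₁] at hbm; linear_combination -hbm
          exact mul_left_cancel₀ (by norm_num : (4:ℤ) ≠ 0) h4
        have hm₁n : IsCoprime m₁ n := hmncop.of_isCoprime_of_dvd_left ⟨2, by linarith only [hm₁]⟩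
        have hm₁pos : 0 < m₁ := by omega
        obtain ⟨p, hp0⟩ := Int.sq_of_isCoprime hm₁n hb1
        have hp : m₁ = p ^ 2 := by
          rcases hp0 with h | h
          · exact h
          · exfalso; linarith only [h, hm₁pos, sq_nonneg p]
        have hpne : p ≠ 0 := by rintro rfl; simp at hp; omega
        obtain ⟨q, hq0⟩ := Int.sq_of_isCoprime (c := b₁) hm₁n.symm (by linear_combination hb1)
        have hq : n = q ^ 2 := by
          rcases hq0 with h | h
          · exact h
          · exfalso; linarith only [h, hnpos, sq_nonneg q]
        have hqne : q ≠ 0 := by rintro rfl; simp at hq; omega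
        have hqo : q % 2 = 1 := by
          rcases Int.even_or_odd q with h | h
          · exfalso
            obtain ⟨t, ht'⟩ := h
            have h5 : n = 4 * (t * t) := by rw [hq, ht']; ring
            omega
          · exact Int.odd_iff.mp h
        -- second triple : (q^2)^2 + (2p^2)^2 = a^2
        have ht2 : PythagoreanTriple (q ^ 2) (2 * p ^ 2) a := by
          have h0 : q ^ 2 * q ^ 2 + 2 * p ^ 2 * (2 * p ^ 2) = a * a := by
            rw [hm₁, hp] at ham
            rw [hq] at ham
            linear_combination -ham
          exact h0
        have hpq : IsCoprime p q := by
          have h1 : IsCoprime (p ^ 2) (q ^ 2) := by rw [← hp, ← hq]; exact hm₁n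
          exact (IsCoprime.pow_right_iff (by norm_num)).mp
            ((IsCoprime.pow_left_iff (by norm_num)).mp h1)
        have hq2 : IsCoprime q (2 : ℤ) := by
          obtain ⟨t, ht'⟩ := Int.odd_iff.mpr hqo
          exact ⟨1, -t, by linarith only [ht']⟩
        have hgq : Int.gcd (q ^ 2) (2 * p ^ 2) = 1 := by
          apply Int.isCoprime_iff_gcd_eq_one.mp
          exact IsCoprime.mul_right (hq2.pow_left) (hpq.symm.pow)
        have hq2o : q ^ 2 % 2 = 1 := by
          obtain ⟨t, ht'⟩ := Int.odd_iff.mpr hqo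
          have h5 : q ^ 2 = 4 * (t * t) + 4 * t + 1 := by rw [ht']; ring
          omega
        obtain ⟨u, v, hqu, hpu, hau, huv, _hpar2, hu0⟩ :=
          PythagoreanTriple.coprime_classification' ht2 hgq hq2o ha
        have hpuv : u * v = p ^ 2 := by
          have h2 : (2:ℤ) * (u * v) = 2 * (p ^ 2) := by linear_combination -hpu
          exact mul_left_cancel₀ (by norm_num : (2:ℤ) ≠ 0) h2
        have huvpos : 0 < u * v := by rw [hpuv]; exact sqpos hpne
        have hu : 0 < u := by
          rcases hu0.lt_or_eq with h | h
          · exact h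
          · exfalso; rw [← h] at huvpos; simp at huvpos
        have hv : 0 < v := by nlinarith only [hu, huvpos]
        have huvcop : IsCoprime u v := Int.isCoprime_iff_gcd_eq_one.mpr huv
        obtain ⟨e, he0⟩ := Int.sq_of_isCoprime huvcop hpuv
        have he : u = e ^ 2 := by
          rcases he0 with h | h
          · exact h
          · exfalso; linarith only [h, hu, sq_nonneg e]
        obtain ⟨f, hf0⟩ := Int.sq_of_isCoprime (c := p) huvcop.symm (by linear_combination hpuv)
        have hf : v = f ^ 2 := by
          rcases hf0 with h | h
          · exact h
          · exfalso; linarith only [h, hv, sq_nonneg f]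
        have hene : e ≠ 0 := by rintro rfl; simp at he; omega
        have hfne : f ≠ 0 := by rintro rfl; simp at hf; omega
        have hnew : e ^ 4 - f ^ 4 = q ^ 2 := by
          rw [he, hf] at hqu; linear_combination -hqu
        have hbound : e.natAbs < N := by
          rw [← hn]
          have h1 : 1 ≤ |e| := Int.one_le_abs hene
          have h3 : u < u ^ 2 + v ^ 2 := by
            have hu1 : (1:ℤ) ≤ u := by omega
            linarith only [sq_nonneg (u - 1), sqpos (ne_of_gt hv), hu1]
          have h4 : u < a := by linarith only [hau, h3]
          have h5 : |e| ≤ e ^ 2 := by linarith only [sq_nonneg (|e| - 1), sq_abs e, h1]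
          have h7 : |e| < a := by
            have h6 : e ^ 2 = u := he.symm
            linarith only [h5, h4, h6]
          have h8 := Int.natAbs_lt_natAbs_of_nonneg_of_lt (abs_nonneg e) h7
          rwa [Int.natAbs_abs] at h8
        exact step e f q hbound hfne hqne hnew
      · -- m odd, n even : symmetric
        obtain ⟨n₁, hn₁⟩ : (2 : ℤ) ∣ n := (Int.even_iff.mpr hne).two_dvd
        have hb1 : m * n₁ = b₁ ^ 2 := by
          have h4 : (4 : ℤ) * (m * n₁) = 4 * (b₁ ^ 2) := by
            rw [hb₁, hn₁] at hbm; linear_combination -hbm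
          exact mul_left_cancel₀ (by norm_num : (4:ℤ) ≠ 0) h4
        have hmn₁ : IsCoprime m n₁ := (hmncop.symm.of_isCoprime_of_dvd_left ⟨2, by linarith only [hn₁]⟩).symm
        have hn₁pos : 0 < n₁ := by omega
        obtain ⟨p, hp0⟩ := Int.sq_of_isCoprime hmn₁ hb1
        have hp : m = p ^ 2 := by
          rcases hp0 with h | h
          · exact h
          · exfalso; linarith only [h, hm, sq_nonneg p]
        have hpne : p ≠ 0 := by rintro rfl; simp at hp; omega
        obtain ⟨q, hq0⟩ := Int.sq_of_isCoprime (c := b₁) hmn₁.symm (by linear_combination hb1)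
        have hq : n₁ = q ^ 2 := by
          rcases hq0 with h | h
          · exact h
          · exfalso; linarith only [h, hn₁pos, sq_nonneg q]
        have hqne : q ≠ 0 := by rintro rfl; simp at hq; omega
        have hpo : p % 2 = 1 := by
          rcases Int.even_or_odd p with h | h
          · exfalso
            obtain ⟨t, ht'⟩ := h
            have h5 : m = 4 * (t * t) := by rw [hp, ht']; ring
            omega
          · exact Int.odd_iff.mp h
        have ht2 : PythagoreanTriple (p ^ 2) (2 * q ^ 2) a := by
          have h0 : p ^ 2 * p ^ 2 + 2 * q ^ 2 * (2 * q ^ 2) = a * a := by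
            rw [hn₁, hq] at ham
            rw [hp] at ham
            linear_combination -ham
          exact h0
        have hpq : IsCoprime p q := by
          have h1 : IsCoprime (p ^ 2) (q ^ 2) := by rw [← hp, ← hq]; exact hmn₁
          exact (IsCoprime.pow_right_iff (by norm_num)).mp
            ((IsCoprime.pow_left_iff (by norm_num)).mp h1)
        have hp2 : IsCoprime p (2 : ℤ) := by
          obtain ⟨t, ht'⟩ := Int.odd_iff.mpr hpo
          exact ⟨1, -t, by linarith only [ht']⟩
        have hgq : Int.gcd (p ^ 2) (2 * q ^ 2) = 1 := by
          apply Int.isCoprime_iff_gcd_eq_one.mp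
          exact IsCoprime.mul_right (hp2.pow_left) (hpq.pow)
        have hp2o : p ^ 2 % 2 = 1 := by
          obtain ⟨t, ht'⟩ := Int.odd_iff.mpr hpo
          have h5 : p ^ 2 = 4 * (t * t) + 4 * t + 1 := by rw [ht']; ring
          omega
        obtain ⟨u, v, hqu, hpu, hau, huv, _hpar2, hu0⟩ :=
          PythagoreanTriple.coprime_classification' ht2 hgq hp2o ha
        have hpuv : u * v = q ^ 2 := by
          have h2 : (2:ℤ) * (u * v) = 2 * (q ^ 2) := by linear_combination -hpu
          exact mul_left_cancel₀ (by norm_num : (2:ℤ) ≠ 0) h2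
        have huvpos : 0 < u * v := by rw [hpuv]; exact sqpos hqne
        have hu : 0 < u := by
          rcases hu0.lt_or_eq with h | h
          · exact h
          · exfalso; rw [← h] at huvpos; simp at huvpos
        have hv : 0 < v := by nlinarith only [hu, huvpos]
        have huvcop : IsCoprime u v := Int.isCoprime_iff_gcd_eq_one.mpr huv
        obtain ⟨e, he0⟩ := Int.sq_of_isCoprime huvcop hpuv
        have he : u = e ^ 2 := by
          rcases he0 with h | h
          · exact h
          · exfalso; linarith only [h, hu, sq_nonneg e]
        obtain ⟨f, hf0⟩ := Int.sq_of_isCoprime (c := q) huvcop.symm (by linear_combination hpuv)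
        have hf : v = f ^ 2 := by
          rcases hf0 with h | h
          · exact h
          · exfalso; linarith only [h, hv, sq_nonneg f]
        have hene : e ≠ 0 := by rintro rfl; simp at he; omega
        have hfne : f ≠ 0 := by rintro rfl; simp at hf; omega
        have hnew : e ^ 4 - f ^ 4 = p ^ 2 := by
          rw [he, hf] at hqu; linear_combination -hqu
        have hbound : e.natAbs < N := by
          rw [← hn]
          have h1 : 1 ≤ |e| := Int.one_le_abs hene
          have h3 : u < u ^ 2 + v ^ 2 := by
            have hu1 : (1:ℤ) ≤ u := by omega
            linarith only [sq_nonneg (u - 1), sqpos (ne_of_gt hv), hu1]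
          have h4 : u < a := by linarith only [hau, h3]
          have h5 : |e| ≤ e ^ 2 := by linarith only [sq_nonneg (|e| - 1), sq_abs e, h1]
          have h7 : |e| < a := by
            have h6 : e ^ 2 = u := he.symm
            linarith only [h5, h4, h6]
          have h8 := Int.natAbs_lt_natAbs_of_nonneg_of_lt (abs_nonneg e) h7
          rwa [Int.natAbs_abs] at h8
        exact step e f p hbound hfne hpne hnew
    · -- b odd : single Pythagorean step
      have ht : PythagoreanTriple (b ^ 2) c (a ^ 2) := by
        have h0 : b ^ 2 * b ^ 2 + c * c = a ^ 2 * (a ^ 2) := by linear_combination -heq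
        exact h0
      have hgbc : Int.gcd (b ^ 2) c = 1 := Int.isCoprime_iff_gcd_eq_one.mp hcb.symm.pow_left
      have hb2o : b ^ 2 % 2 = 1 := by
        obtain ⟨t, ht'⟩ := hbo
        have h5 : b ^ 2 = 4 * (t * t) + 4 * t + 1 := by rw [ht']; ring
        omega
      obtain ⟨m, n, hbm, hcm, ham, hmn, _hpar, hm0⟩ :=
        PythagoreanTriple.coprime_classification' ht hgbc hb2o (sqpos (ne_of_gt ha))
      have hnew : m ^ 4 - n ^ 4 = (a * b) ^ 2 := by
        linear_combination (-(b ^ 2)) * ham + (-(m ^ 2 + n ^ 2)) * hbm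
      have hn0 : n ≠ 0 := by
        rintro rfl
        rw [mul_zero] at hcm
        exact (ne_of_gt hc) hcm
      have habne : a * b ≠ 0 := mul_ne_zero (ne_of_gt ha) (ne_of_gt hb)
      have hbound : m.natAbs < N := by
        rw [← hn]
        have h2 : m ^ 2 < a ^ 2 := by linarith only [ham, sqpos hn0]
        have h3 := Int.natAbs_lt_natAbs_of_nonneg_of_lt (sq_nonneg m) h2
        rw [Int.natAbs_pow, Int.natAbs_pow] at h3
        exact lt_of_pow_lt_pow_left₀ 2 (Nat.zero_le _) h3
      exact step m n (a * b) hbound hn0 habne hnew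
  · -- non-coprime : divide by the gcd and recurse
    have hgpos : 0 < Int.gcd a b :=
      Nat.pos_of_ne_zero (fun h => (ne_of_gt ha) (Int.gcd_eq_zero_iff.mp h).1)
    have hG0 : 0 < (Int.gcd a b : ℤ) := by exact_mod_cast hgpos
    obtain ⟨a₁, ha₁⟩ : (Int.gcd a b : ℤ) ∣ a := Int.gcd_dvd_left _ _
    obtain ⟨b₁, hb₁⟩ : (Int.gcd a b : ℤ) ∣ b := Int.gcd_dvd_right _ _
    set G : ℤ := (Int.gcd a b : ℤ) with hG
    rw [ha₁, hb₁] at heq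
    have hdvd : (G ^ 2) ^ 2 ∣ c ^ 2 := ⟨a₁ ^ 4 - b₁ ^ 4, by linear_combination -heq⟩
    obtain ⟨c₁, hc₁⟩ : G ^ 2 ∣ c := (Int.pow_dvd_pow_iff two_ne_zero).mp hdvd
    rw [hc₁] at heq
    have heq₁ : a₁ ^ 4 - b₁ ^ 4 = c₁ ^ 2 :=
      mul_left_cancel₀ (pow_ne_zero 4 (ne_of_gt hG0)) (by linear_combination heq)
    have ha₁p : 0 < a₁ := by
      have h := ha; rw [ha₁] at h; nlinarith only [h, hG0]
    have hb₁p : 0 < b₁ := by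
      have h := hb; rw [hb₁] at h; nlinarith only [h, hG0]
    have hc₁p : 0 < c₁ := by
      have h := hc; rw [hc₁] at h; nlinarith only [h, sqpos (ne_of_gt hG0)]
    have hbound : a₁.natAbs < N := by
      rw [← hn, ha₁, Int.natAbs_mul]
      have h1 : 1 ≤ a₁.natAbs := by
        have h0 : a₁ ≠ 0 := ne_of_gt ha₁p
        omega
      have h2 : 2 ≤ G.natAbs := by
        have h0 : G.natAbs = Int.gcd a b := by simp [hG]
        omega
      calc a₁.natAbs < 2 * a₁.natAbs := by omega
        _ ≤ G.natAbs * a₁.natAbs := Nat.mul_le_mul_right _ h2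
    exact (ih a₁.natAbs hbound a₁ b₁ c₁ rfl ha₁p hb₁p hc₁p) heq₁

/-- Fermat's right triangle theorem : `a^4 - b^4 = c^2` has no solutions with `b, c ≠ 0`. -/
private lemma fermat44 {a b c : ℤ} (hb : b ≠ 0) (hc : c ≠ 0) : a ^ 4 - b ^ 4 ≠ c ^ 2 := by
  intro heq
  have ha : a ≠ 0 := by
    rintro rfl
    have h1 : 0 < b ^ 4 := by rw [← abs4]; exact pow_pos (abs_pos.mpr hb) 4
    linarith only [h1, heq, sq_nonneg c]
  refine (fermat44_key |a|.natAbs |a| |b| |c| rfl (abs_pos.mpr ha) (abs_pos.mpr hb)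
    (abs_pos.mpr hc)) ?_
  rw [abs4, abs4, sq_abs]; exact heq

set_option maxHeartbeats 1000000 in
private lemma resolvent_aux (X Y X' Y' : ℤ) (hXp : 0 < X) (hYp : 0 < Y) (hX'p : 0 < X')
    (hY'p : 0 < Y') (h1' : X ^ 2 - Y ^ 2 = X' ^ 2 + Y' ^ 2) (h2' : X * Y = X' * Y')
    (h3' : Int.gcd X Y = 1) (h4' : Int.gcd X' Y' = 1) : False := by
  have hXY : IsCoprime X Y := Int.isCoprime_iff_gcd_eq_one.mpr h3'
  have hXY' : IsCoprime X' Y' := Int.isCoprime_iff_gcd_eq_one.mpr h4'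
  have hgpos : 0 < Int.gcd X X' :=
    Nat.pos_of_ne_zero (fun h => (ne_of_gt hXp) (Int.gcd_eq_zero_iff.mp h).1)
  have hG0 : 0 < (Int.gcd X X' : ℤ) := by exact_mod_cast hgpos
  set G : ℤ := (Int.gcd X X' : ℤ) with hG
  obtain ⟨c, hXc⟩ : G ∣ X := by rw [hG]; exact Int.gcd_dvd_left _ _
  obtain ⟨d, hX'd⟩ : G ∣ X' := by rw [hG]; exact Int.gcd_dvd_right _ _
  have hcd : Int.gcd c d = 1 := by
    have h := Int.gcd_div_gcd_div_gcd hgpos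
    rw [← hG] at h
    have hc' : X / G = c := by
      rw [hXc]; exact Int.mul_ediv_cancel_left c (ne_of_gt hG0)
    have hd' : X' / G = d := by
      rw [hX'd]; exact Int.mul_ediv_cancel_left d (ne_of_gt hG0)
    rwa [hc', hd'] at h
  have hcp : 0 < c := by
    have h := hXp; rw [hXc] at h; nlinarith only [h, hG0]
  have hdp : 0 < d := by
    have h := hX'p; rw [hX'd] at h; nlinarith only [h, hG0]
  have hcdcop : IsCoprime c d := Int.isCoprime_iff_gcd_eq_one.mpr hcd
  have hkey : c * Y = d * Y' := by
    have h := h2'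
    rw [hXc, hX'd] at h
    have h5 : G * (c * Y) = G * (d * Y') := by linear_combination h
    exact mul_left_cancel₀ (ne_of_gt hG0) h5
  obtain ⟨b, hYb⟩ : d ∣ Y := hcdcop.symm.dvd_of_dvd_mul_left ⟨Y', hkey⟩
  have hY'b : Y' = c * b := by
    rw [hYb] at hkey
    have h5 : d * (c * b) = d * Y' := by linear_combination hkey
    exact (mul_left_cancel₀ (ne_of_gt hdp) h5).symm
  have hbp : 0 < b := by
    have h := hYp; rw [hYb] at h; nlinarith only [h, hdp]
  have hGb : IsCoprime G b :=
    (hXY.of_isCoprime_of_dvd_left ⟨c, hXc⟩).of_isCoprime_of_dvd_right ⟨d, by rw [hYb]; ring⟩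
  have hcb : IsCoprime c b :=
    (hXY.of_isCoprime_of_dvd_left ⟨G, by rw [hXc]; ring⟩).of_isCoprime_of_dvd_right ⟨d, by rw [hYb]; ring⟩
  have hdb : IsCoprime d b :=
    (hXY'.of_isCoprime_of_dvd_left ⟨G, by rw [hX'd]; ring⟩).of_isCoprime_of_dvd_right
      ⟨c, by rw [hY'b]; ring⟩
  have hmaster : G ^ 2 * (c ^ 2 - d ^ 2) = b ^ 2 * (c ^ 2 + d ^ 2) := by
    have h := h1'
    rw [hXc, hX'd, hYb, hY'b] at h
    linear_combination h
  have hGb2 : IsCoprime (G ^ 2) (b ^ 2) := hGb.pow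
  have hdd : G ^ 2 ∣ b ^ 2 * (c ^ 2 + d ^ 2) := ⟨c ^ 2 - d ^ 2, by linear_combination -hmaster⟩
  obtain ⟨k, hk⟩ : G ^ 2 ∣ c ^ 2 + d ^ 2 := hGb2.dvd_of_dvd_mul_left hdd
  have hk2 : c ^ 2 - d ^ 2 = b ^ 2 * k := by
    have h6 : G ^ 2 * (c ^ 2 - d ^ 2) = G ^ 2 * (b ^ 2 * k) := by
      linear_combination hmaster + b ^ 2 * hk
    exact mul_left_cancel₀ (pow_ne_zero 2 (ne_of_gt hG0)) h6
  have hkdvd : k ∣ 2 := by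
    obtain ⟨s, t, hst⟩ : IsCoprime (c ^ 2) (d ^ 2) := hcdcop.pow
    refine ⟨s * (G ^ 2 + b ^ 2) + t * (G ^ 2 - b ^ 2), ?_⟩
    linear_combination (-2 : ℤ) * hst + s * hk + s * hk2 + t * hk - t * hk2
  have hkpos : 0 < k := by
    nlinarith only [sqpos (ne_of_gt hcp), sqpos (ne_of_gt hdp), sqpos (ne_of_gt hG0), hk]
  have hk12 : k = 1 ∨ k = 2 := by
    have := Int.le_of_dvd (by norm_num) hkdvd
    omega
  rcases hk12 with rfl | rfl
  · have hfin : c ^ 4 - d ^ 4 = (G * b) ^ 2 := by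
      linear_combination (c ^ 2 - d ^ 2) * hk + G ^ 2 * hk2
    exact fermat44 (ne_of_gt hdp) (mul_ne_zero (ne_of_gt hG0) (ne_of_gt hbp)) hfin
  · have hfin : c ^ 4 - d ^ 4 = (2 * G * b) ^ 2 := by
      linear_combination (c ^ 2 - d ^ 2) * hk + 2 * G ^ 2 * hk2
    exact fermat44 (ne_of_gt hdp)
      (mul_ne_zero (mul_ne_zero two_ne_zero (ne_of_gt hG0)) (ne_of_gt hbp)) hfin

theorem resolvent_only_trivial_solutions
    (x y x' y' : ℤ)
    (h1 : x ^ 2 - y ^ 2 = x' ^ 2 + y' ^ 2)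
    (h2 : x * y = x' * y')
    (h3 : Int.gcd x y = 1)
    (h4 : Int.gcd x' y' = 1) :
    x * y = 0 := by
  by_contra hxy
  have hx : x ≠ 0 := fun h => hxy (by rw [h, zero_mul])
  have hy : y ≠ 0 := fun h => hxy (by rw [h, mul_zero])
  have hxy' : x' * y' ≠ 0 := h2 ▸ hxy
  have hx' : x' ≠ 0 := fun h => hxy' (by rw [h, zero_mul])
  have hy' : y' ≠ 0 := fun h => hxy' (by rw [h, mul_zero])
  refine resolvent_aux |x| |y| |x'| |y'| (abs_pos.mpr hx) (abs_pos.mpr hy) (abs_pos.mpr hx')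
    (abs_pos.mpr hy') ?_ ?_ ?_ ?_
  · rw [sq_abs, sq_abs, sq_abs, sq_abs]; exact h1
  · rw [← abs_mul, ← abs_mul, h2]
  · rw [Int.abs_eq_natAbs, Int.abs_eq_natAbs, Int.gcd_natCast_natCast]; exact h3
  · rw [Int.abs_eq_natAbs, Int.abs_eq_natAbs, Int.gcd_natCast_natCast]; exact h4
end

section
/- The equation x⁴ + 4y⁴ = z² with the constraint gcd(x,y) = 1 has only trivial solutions over the integers: every integer solution (x, y, z) with gcd(x,y) = 1 satisfies x·y = 0. -/
set_option maxHeartbeats 1000000 in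
private theorem quartic_aux : ∀ N : ℕ, ∀ x y z : ℤ, z.natAbs ≤ N →
    Int.gcd x y = 1 → x ^ 4 + 4 * y ^ 4 = z ^ 2 → x * y = 0 := by
  intro N
  induction N with
  | zero =>
    intro x y z hz hg he
    have hz0 : z = 0 := by
      have := Int.natAbs_eq_zero.mp (Nat.le_zero.mp hz)
      exact this
    subst hz0
    have hx4 : (0:ℤ) ≤ x ^ 4 := by positivity
    have hy4 : (0:ℤ) ≤ y ^ 4 := by positivity
    have hx : x = 0 := by
      have : x ^ 4 = 0 := by simp at he; linarith
      exact pow_eq_zero_iff (by norm_num) |>.mp this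
    simp [hx]
  | succ n ih =>
    intro x y z hzN hg he
    by_cases hx0 : x = 0
    · simp [hx0]
    by_cases hy0 : y = 0
    · simp [hy0]
    exfalso
    -- WLOG z > 0
    have hz0 : z ≠ 0 := by
      intro h; rw [h] at he
      have hx4 : (0:ℤ) < x ^ 4 := by positivity
      have hy4 : (0:ℤ) < y ^ 4 := by positivity
      simp at he; linarith
    obtain ⟨Z, hZpos, hZN, heqZ⟩ : ∃ Z : ℤ, 0 < Z ∧ Z.natAbs ≤ n + 1 ∧
        x ^ 4 + 4 * y ^ 4 = Z ^ 2 :=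
      ⟨|z|, abs_pos.mpr hz0, by rwa [Int.natAbs_abs], by rw [sq_abs]; exact he⟩
    clear he hzN hz0
    have hxy : IsCoprime x y := Int.isCoprime_iff_gcd_eq_one.mpr hg
    rcases Int.even_or_odd x with hxe | hxo
    · -- x even : x = 2u, then z = 2w, y^4 + 4u^4 = w^2
      obtain ⟨u, rfl⟩ : ∃ u, x = 2 * u := by
        obtain ⟨u, hu⟩ := hxe; exact ⟨u, by omega⟩
      have hu0 : u ≠ 0 := by intro h; apply hx0; rw [h]; ring
      have h2Z : (2:ℤ) ∣ Z := by
        apply Int.Prime.dvd_pow' (n := Z) (k := 2) Nat.prime_two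
        exact ⟨8 * u ^ 4 + 2 * y ^ 4, by push_cast; linear_combination -heqZ⟩
      obtain ⟨w, rfl⟩ := h2Z
      have hw : y ^ 4 + 4 * u ^ 4 = w ^ 2 := by
        have h4' : (4:ℤ) * (y ^ 4 + 4 * u ^ 4) = 4 * w ^ 2 := by linear_combination heqZ
        exact mul_left_cancel₀ (by norm_num) h4'
      have hgyu : Int.gcd y u = 1 := by
        apply Int.isCoprime_iff_gcd_eq_one.mp
        exact (hxy.symm.of_mul_right_right)
      have hw0 : w ≠ 0 := by
        intro h; rw [h] at hw
        have hpos : (0:ℤ) < y ^ 4 + 4 * u ^ 4 := by positivity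
        simp at hw
        omega
      have hlt : w.natAbs ≤ n := by
        have : (2*w).natAbs = 2 * w.natAbs := by
          rw [Int.natAbs_mul]; rfl
        omega
      have := ih y u w hlt hgyu hw
      rcases mul_eq_zero.mp this with h | h
      · exact hy0 h
      · exact hu0 h
    · -- x odd
      have hx2 : x % 2 = 1 := Int.odd_iff.mp hxo
      have ht : PythagoreanTriple (x ^ 2) (2 * y ^ 2) Z := by
        unfold PythagoreanTriple
        linear_combination heqZ
      have hc2 : IsCoprime x 2 := by
        obtain ⟨k, hk⟩ := hxo
        exact ⟨1, -k, by rw [hk]; ring⟩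
      have hco : Int.gcd (x ^ 2) (2 * y ^ 2) = 1 := by
        apply Int.isCoprime_iff_gcd_eq_one.mp
        exact (hc2.mul_right (hxy.pow_right)).pow_left
      have hx22 : x ^ 2 % 2 = 1 := by
        obtain ⟨k, hk⟩ := hxo
        rw [hk]; ring_nf; omega
      obtain ⟨m, n', h1, h2, h3, h4, _h5, h6⟩ := ht.coprime_classification' hco hx22 hZpos
      have hmn : m * n' = y ^ 2 :=
        mul_left_cancel₀ two_ne_zero (by linear_combination -h2)
      have hmn_pos : 0 < m * n' := by
        rw [hmn]; positivity
      have hm_pos : 0 < m := lt_of_le_of_ne h6 (by rintro rfl; simp at hmn_pos)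
      have hn_pos : 0 < n' := by
        rcases mul_pos_iff.mp hmn_pos with ⟨_, h⟩ | ⟨h, _⟩
        · exact h
        · exact absurd hm_pos (not_lt.mpr h.le)
      -- m = u^2, n' = v^2
      obtain ⟨u, hu⟩ := Int.sq_of_gcd_eq_one h4 hmn
      have hu : m = u ^ 2 := by
        rcases hu with h | h
        · exact h
        · exfalso; rw [h] at hm_pos
          have := sq_nonneg u; omega
      obtain ⟨v, hv⟩ := Int.sq_of_gcd_eq_one (by rwa [Int.gcd_comm] at h4) (by rw [mul_comm]; exact hmn)
      have hv : n' = v ^ 2 := by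
        rcases hv with h | h
        · exact h
        · exfalso; rw [h] at hn_pos
          have := sq_nonneg v; omega
      have hu0 : u ≠ 0 := by intro h; rw [h] at hu; simp at hu; omega
      have hv0 : v ≠ 0 := by intro h; rw [h] at hv; simp at hv; omega
      -- second triple : x^2 + v^4 = u^4
      have ht2 : PythagoreanTriple x (v ^ 2) (u ^ 2) := by
        unfold PythagoreanTriple
        linear_combination h1 + (m + u^2) * hu - (n' + v^2) * hv
      have hcxn : IsCoprime x n' := by
        have hmn' : IsCoprime m n' := Int.isCoprime_iff_gcd_eq_one.mpr h4
        have h1' : m ^ 2 = x ^ 2 + n' * n' := by linear_combination -h1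
        have h' : IsCoprime (x ^ 2 + n' * n') n' := by rw [← h1']; exact hmn'.pow_left
        have h'' := h'.add_mul_left_left (-n')
        have he' : x ^ 2 + n' * n' + n' * -n' = x ^ 2 := by ring
        rw [he'] at h''
        exact IsCoprime.of_mul_left_left (by rwa [← sq])
      have hco2 : Int.gcd x (v ^ 2) = 1 := by
        apply Int.isCoprime_iff_gcd_eq_one.mp
        rwa [hv] at hcxn
      have hu2pos : 0 < u ^ 2 := by positivity
      obtain ⟨m₂, n₂, g1, g2, g3, g4, g5, g6⟩ := ht2.coprime_classification' hco2 hx2 hu2pos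
      -- v even
      have h2v : (2:ℤ) ∣ v := by
        apply Int.Prime.dvd_pow' (n := v) (k := 2) Nat.prime_two
        exact ⟨m₂ * n₂, by push_cast; linear_combination g2⟩
      obtain ⟨w, rfl⟩ := h2v
      have hmn2 : m₂ * n₂ = 2 * w ^ 2 := by
        have h2' : 2 * (m₂ * n₂) = 2 * (2 * w ^ 2) := by linear_combination -g2
        exact mul_left_cancel₀ two_ne_zero h2'
      have hw0 : w ≠ 0 := by intro h; apply hv0; rw [h]; ring
      have hmn2_pos : 0 < m₂ * n₂ := by rw [hmn2]; positivity
      have hm2_pos : 0 < m₂ := lt_of_le_of_ne g6 (by rintro rfl; simp at hmn2_pos)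
      have hn2_pos : 0 < n₂ := by
        rcases mul_pos_iff.mp hmn2_pos with ⟨_, h⟩ | ⟨h, _⟩
        · exact h
        · exact absurd hm2_pos (not_lt.mpr h.le)
      have hcmn2 : IsCoprime m₂ n₂ := Int.isCoprime_iff_gcd_eq_one.mpr g4
      -- size bound : |u| ≤ n
      have hZval : Z = u ^ 4 + (2*w) ^ 4 := by
        rw [h3, hu, hv]; ring
      have huZ : u.natAbs < Z.natAbs := by
        have h1' : (u.natAbs : ℤ) ≤ u ^ 2 := Int.natAbs_le_self_sq u
        have h2' : u ^ 2 ≤ u ^ 4 := by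
          calc u ^ 2 ≤ (u ^ 2) ^ 2 := Int.le_self_sq (u ^ 2)
          _ = u ^ 4 := by ring
        have h3' : u ^ 4 < Z := by
          rw [hZval]
          have hpw : 0 < (2*w) ^ 4 := by positivity
          exact lt_add_of_pos_right _ hpw
        have hlt : (u.natAbs : ℤ) < (Z.natAbs : ℤ) := by
          rw [Int.natAbs_of_nonneg (le_of_lt hZpos)]
          exact lt_of_le_of_lt (le_trans h1' h2') h3'
        exact_mod_cast hlt
      have huN : u.natAbs ≤ n := by omega
      rcases g5 with ⟨hm2e, _⟩ | ⟨_, hn2e⟩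
      · -- m₂ even : m₂ = 2 m₃
        obtain ⟨m₃, rfl⟩ : ∃ m₃, m₂ = 2 * m₃ := ⟨m₂ / 2, by omega⟩
        have hm3n2 : m₃ * n₂ = w ^ 2 :=
          mul_left_cancel₀ two_ne_zero (by linear_combination hmn2)
        have hcm3 : Int.gcd m₃ n₂ = 1 := by
          apply Int.isCoprime_iff_gcd_eq_one.mp
          exact hcmn2.of_mul_left_right
        have hm3_pos : 0 < m₃ := by omega
        obtain ⟨s, hs⟩ := Int.sq_of_gcd_eq_one hcm3 hm3n2
        have hs : m₃ = s ^ 2 := by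
          rcases hs with h | h
          · exact h
          · exfalso; rw [h] at hm3_pos
            have := sq_nonneg s; omega
        obtain ⟨t, htq⟩ := Int.sq_of_gcd_eq_one (by rwa [Int.gcd_comm] at hcm3)
          (by rw [mul_comm]; exact hm3n2)
        have htq : n₂ = t ^ 2 := by
          rcases htq with h | h
          · exact h
          · exfalso; rw [h] at hn2_pos
            have := sq_nonneg t; omega
        have hs0 : s ≠ 0 := by intro h; rw [h] at hs; simp at hs; omega
        have ht0 : t ≠ 0 := by intro h; rw [h] at htq; simp at htq; omega
        have hnew : t ^ 4 + 4 * s ^ 4 = u ^ 2 := by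
          have hg3 := g3
          rw [hs, htq] at hg3
          linear_combination -hg3
        have hgst : Int.gcd t s = 1 := by
          apply Int.isCoprime_iff_gcd_eq_one.mp
          have : IsCoprime (s ^ 2) (t ^ 2) := by rw [← hs, ← htq]; exact hcmn2.of_mul_left_right
          have h' : IsCoprime s t := by
            have := this
            rw [sq, sq] at this
            exact (this.of_mul_left_left).of_mul_right_left
          exact h'.symm
        have := ih t s u huN hgst hnew
        rcases mul_eq_zero.mp this with h | h
        · exact ht0 h
        · exact hs0 h
      · -- n₂ even : n₂ = 2 n₃
        obtain ⟨n₃, rfl⟩ : ∃ n₃, n₂ = 2 * n₃ := ⟨n₂ / 2, by omega⟩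
        have hm2n3 : m₂ * n₃ = w ^ 2 := by
          have h2' : (2:ℤ) * (m₂ * n₃) = 2 * w ^ 2 := by linear_combination hmn2
          exact mul_left_cancel₀ two_ne_zero h2'
        have hcm2 : Int.gcd m₂ n₃ = 1 := by
          apply Int.isCoprime_iff_gcd_eq_one.mp
          exact hcmn2.of_mul_right_right
        have hn3_pos : 0 < n₃ := by omega
        obtain ⟨s, hs⟩ := Int.sq_of_gcd_eq_one hcm2 hm2n3
        have hs : m₂ = s ^ 2 := by
          rcases hs with h | h
          · exact h
          · exfalso; rw [h] at hm2_pos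
            have := sq_nonneg s; omega
        obtain ⟨t, htq⟩ := Int.sq_of_gcd_eq_one (by rwa [Int.gcd_comm] at hcm2)
          (by rw [mul_comm]; exact hm2n3)
        have htq : n₃ = t ^ 2 := by
          rcases htq with h | h
          · exact h
          · exfalso; rw [h] at hn3_pos
            have := sq_nonneg t; omega
        have hs0 : s ≠ 0 := by intro h; rw [h] at hs; simp at hs; omega
        have ht0 : t ≠ 0 := by intro h; rw [h] at htq; simp at htq; omega
        have hnew : s ^ 4 + 4 * t ^ 4 = u ^ 2 := by
          have hg3 := g3
          rw [hs, htq] at hg3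
          linear_combination -hg3
        have hgst : Int.gcd s t = 1 := by
          apply Int.isCoprime_iff_gcd_eq_one.mp
          have : IsCoprime (s ^ 2) (t ^ 2) := by rw [← hs, ← htq]; exact hcmn2.of_mul_right_right
          rw [sq, sq] at this
          exact (this.of_mul_left_left).of_mul_right_left
        have := ih s t u huN hgst hnew
        rcases mul_eq_zero.mp this with h | h
        · exact hs0 h
        · exact ht0 h

theorem quartic_x4_add_4y4_only_trivial
    (x y z : ℤ)
    (hgcd : Int.gcd x y = 1)
    (heq : x ^ 4 + 4 * y ^ 4 = z ^ 2) :
    x * y = 0 :=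
  quartic_aux z.natAbs x y z le_rfl hgcd heq
end

section
/- The equation x⁴ + 6x²y² + y⁴ = z² with the constraint gcd(x,y) = 1 has only trivial solutions over the integers: every integer solution (x, y, z) with gcd(x,y) = 1 satisfies x·y = 0. -/
set_option maxHeartbeats 1000000


private lemma coprime_of_sq_coprime {u v : ℤ} (h : IsCoprime (u ^ 2) (v ^ 2)) : IsCoprime u v :=
  (h.of_isCoprime_of_dvd_left (dvd_pow_self u two_ne_zero)).of_isCoprime_of_dvd_right
    (dvd_pow_self v two_ne_zero)

private lemma step_u4_4v4 {a u v : ℤ} (ha : 0 < a) (hg : Int.gcd u v = 1)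
    (hu : u % 2 = 1) (hv : v ≠ 0) (h : a ^ 2 = u ^ 4 + 4 * v ^ 4) :
    ∃ e f w : ℤ, Int.gcd e f = 1 ∧ f ≠ 0 ∧ w ≠ 0 ∧ e ^ 4 = f ^ 4 + w ^ 2 ∧
      (e.natAbs : ℤ) < a := by
  have hu0 : u ≠ 0 := by intro h0; rw [h0] at hu; norm_num at hu
  have huv : IsCoprime u v := Int.isCoprime_iff_gcd_eq_one.mpr hg
  have hu2odd : u ^ 2 % 2 = 1 := by rw [sq, Int.mul_emod, hu]; decide
  have hndvd : ¬ (2:ℤ) ∣ u ^ 2 := by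
    intro hd
    obtain ⟨k, hk⟩ := hd
    omega
  have hcp2 : IsCoprime (u ^ 2) 2 := ((Int.prime_two.coprime_iff_not_dvd).mpr hndvd).symm
  have hcp : Int.gcd (u ^ 2) (2 * v ^ 2) = 1 :=
    Int.isCoprime_iff_gcd_eq_one.mp (IsCoprime.mul_right hcp2 (huv.pow))
  have ht : PythagoreanTriple (u ^ 2) (2 * v ^ 2) a := by
    delta PythagoreanTriple
    linear_combination (-1 : ℤ) * h
  obtain ⟨p, q, k1, k2, k3, k4, _, k6⟩ := ht.coprime_classification' hcp hu2odd ha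
  -- k1 : u^2 = p^2 - q^2, k2 : 2*v^2 = 2*p*q, k3 : a = p^2+q^2
  have hpq : p * q = v ^ 2 := by linarith
  have hpqpos : 0 < p * q := by
    rw [hpq]; positivity
  have hp0 : 0 < p := by
    rcases lt_or_eq_of_le k6 with h' | h'
    · exact h'
    · exfalso; rw [← h'] at hpqpos; simp at hpqpos
  have hq0 : 0 < q := by
    rcases mul_pos_iff.mp hpqpos with ⟨_, h'⟩ | ⟨h', _⟩
    · exact h'
    · exact absurd hp0 (not_lt.mpr (le_of_lt h'))
  obtain ⟨e, he⟩ := Int.sq_of_gcd_eq_one k4 hpq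
  have he' : p = e ^ 2 := by
    rcases he with he | he
    · exact he
    · exfalso; nlinarith [sq_nonneg e]
  rw [Int.gcd_comm] at k4
  rw [mul_comm] at hpq
  obtain ⟨f, hf⟩ := Int.sq_of_gcd_eq_one k4 hpq
  have hf' : q = f ^ 2 := by
    rcases hf with hf | hf
    · exact hf
    · exfalso; nlinarith [sq_nonneg f]
  refine ⟨e, f, u, ?_, ?_, hu0, ?_, ?_⟩
  · apply Int.isCoprime_iff_gcd_eq_one.mp
    apply coprime_of_sq_coprime
    rw [← he', ← hf']
    rw [Int.gcd_comm] at k4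
    exact Int.isCoprime_iff_gcd_eq_one.mpr k4
  · intro h0; rw [h0] at hf'; simp at hf'; omega
  · -- e^4 = f^4 + u^2
    have : u ^ 2 = p ^ 2 - q ^ 2 := k1
    rw [he', hf'] at this
    linarith [this]
  · -- measure
    calc (e.natAbs : ℤ) ≤ e ^ 2 := Int.natAbs_le_self_sq e
      _ = p := he'.symm
      _ ≤ p ^ 2 := Int.le_self_sq p
      _ < p ^ 2 + q ^ 2 := by nlinarith
      _ = a := k3.symm



private lemma no_fermat_descent : ∀ n : ℕ, ∀ a b c : ℤ, a.natAbs = n →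
    Int.gcd a b = 1 → b ≠ 0 → c ≠ 0 → a ^ 4 = b ^ 4 + c ^ 2 → False := by
  intro n
  induction n using Nat.strong_induction_on with
  | _ n ih =>
  intro a b c hn hg hb hc h
  subst hn
  have ha0 : a ≠ 0 := by
    rintro rfl
    have h1 : (0:ℤ) < b ^ 4 + c ^ 2 := by positivity
    simp at h
    nlinarith [sq_nonneg b, sq_nonneg c]
  set A : ℤ := (a.natAbs : ℤ) with hAdef
  have hA : 0 < A := Int.natCast_pos.mpr (Int.natAbs_pos.mpr ha0)
  have hA4 : A ^ 4 = a ^ 4 := by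
    rw [hAdef, ← Int.abs_eq_natAbs, pow_abs, abs_of_nonneg (by positivity : (0:ℤ) ≤ a ^ 4)]
  have hab : IsCoprime a b := Int.isCoprime_iff_gcd_eq_one.mpr hg
  -- coprimality of b and c
  have hbc : IsCoprime b c := by
    have h1 : IsCoprime b (a ^ 4) := hab.symm.pow_right
    have h3 := h1.add_mul_left_right (-(b ^ 3))
    have h4 : a ^ 4 + b * -(b ^ 3) = c ^ 2 := by linear_combination h
    rw [h4] at h3
    exact h3.of_isCoprime_of_dvd_right (dvd_pow_self c two_ne_zero)
  rcases Int.emod_two_eq b with hb2 | hb2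
  · -- b even
    -- a is odd
    have hax : a % 2 = 1 := by
      rcases Int.emod_two_eq a with h' | h'
      · exfalso
        have h2a : (2:ℤ) ∣ a := Int.dvd_of_emod_eq_zero h'
        have h2b : (2:ℤ) ∣ b := Int.dvd_of_emod_eq_zero hb2
        have := Int.dvd_gcd h2a h2b
        rw [hg] at this
        norm_num at this
      · exact h'
    have haodd : Odd a := Int.odd_iff.mpr hax
    have hbeven : Even b := Int.even_iff.mpr hb2
    have hcodd : c % 2 = 1 := by
      have hc2 : c ^ 2 = a ^ 4 - b ^ 4 := by linear_combination (-1 : ℤ) * h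
      have hodd : Odd (c ^ 2) := by
        rw [hc2]
        exact (haodd.pow).sub_even (hbeven.pow_of_ne_zero (by norm_num))
      rcases Int.even_or_odd c with he | ho
      · exact absurd hodd (Int.not_odd_iff_even.mpr (he.pow_of_ne_zero two_ne_zero))
      · exact Int.odd_iff.mp ho
    have ht : PythagoreanTriple c (b ^ 2) (A ^ 2) := by
      delta PythagoreanTriple
      linear_combination (-1 : ℤ) * h - hA4
    have hgcb : Int.gcd c (b ^ 2) = 1 :=
      Int.isCoprime_iff_gcd_eq_one.mp (hbc.symm.pow_right)
    obtain ⟨m, n', k1, k2, k3, k4, k5, k6⟩ :=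
      ht.coprime_classification' hgcb hcodd (by positivity)
    -- k1 : c = m^2 - n'^2, k2 : b^2 = 2*m*n', k3 : A^2 = m^2 + n'^2
    have hb2pos : 0 < b ^ 2 := by positivity
    have hmn : 0 < m * n' := by nlinarith
    have hm0 : 0 < m := by
      rcases lt_or_eq_of_le k6 with h' | h'
      · exact h'
      · exfalso; rw [← h'] at hmn; simp at hmn
    have hn0 : 0 < n' := by
      rcases mul_pos_iff.mp hmn with ⟨_, h'⟩ | ⟨h', _⟩
      · exact h'
      · exact absurd hm0 (not_lt.mpr (le_of_lt h'))
    obtain ⟨b', rfl⟩ : (2:ℤ) ∣ b := Int.dvd_of_emod_eq_zero hb2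
    have hmncop : IsCoprime m n' := Int.isCoprime_iff_gcd_eq_one.mpr k4
    rcases k5 with ⟨hme, hno⟩ | ⟨hmo, hne⟩
    · -- m even, n' odd
      obtain ⟨m', rfl⟩ : (2:ℤ) ∣ m := Int.dvd_of_emod_eq_zero hme
      have hk : m' * n' = b' ^ 2 := by
        apply (mul_right_inj' (by norm_num : (4:ℤ) ≠ 0)).mp
        linear_combination (-1 : ℤ) * k2
      have hm'cop : Int.gcd m' n' = 1 := by
        apply Int.isCoprime_iff_gcd_eq_one.mp
        exact hmncop.of_isCoprime_of_dvd_left ⟨2, by ring⟩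
      have hm'0 : 0 < m' := by linarith
      obtain ⟨u, hu⟩ := Int.sq_of_gcd_eq_one hm'cop hk
      have hu' : m' = u ^ 2 := by
        rcases hu with h' | h'
        · exact h'
        · exfalso; nlinarith [sq_nonneg u]
      rw [Int.gcd_comm] at hm'cop
      rw [mul_comm] at hk
      obtain ⟨v, hv⟩ := Int.sq_of_gcd_eq_one hm'cop hk
      have hv' : n' = v ^ 2 := by
        rcases hv with h' | h'
        · exact h'
        · exfalso; nlinarith [sq_nonneg v]
      have hvodd : v % 2 = 1 := by
        rcases Int.emod_two_eq v with h' | h'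
        · exfalso
          obtain ⟨t, ht'⟩ : (2:ℤ) ∣ v := Int.dvd_of_emod_eq_zero h'
          have h2 : n' = 2 * (2 * t ^ 2) := by rw [hv', ht']; ring
          rw [h2, Int.mul_emod_right] at hno
          norm_num at hno
        · exact h'
      have hu0 : u ≠ 0 := by
        intro h0; rw [h0] at hu'; simp at hu'; omega
      have hguv : Int.gcd v u = 1 := by
        apply Int.isCoprime_iff_gcd_eq_one.mp
        apply coprime_of_sq_coprime
        rw [← hu', ← hv']
        exact (Int.isCoprime_iff_gcd_eq_one.mpr hm'cop)
      have heq2 : A ^ 2 = v ^ 4 + 4 * u ^ 4 := by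
        rw [hu', hv'] at k3
        linear_combination k3
      obtain ⟨e, f, w, hg', hf', hw', heq', hlt'⟩ := step_u4_4v4 hA hguv hvodd hu0 heq2
      refine ih e.natAbs ?_ e f w rfl hg' hf' hw' heq'
      rw [hAdef] at hlt'
      exact_mod_cast hlt'
    · -- m odd, n' even
      obtain ⟨n'', rfl⟩ : (2:ℤ) ∣ n' := Int.dvd_of_emod_eq_zero hne
      have hk : m * n'' = b' ^ 2 := by
        apply (mul_right_inj' (by norm_num : (4:ℤ) ≠ 0)).mp
        linear_combination (-1 : ℤ) * k2
      have hmcop : Int.gcd m n'' = 1 := by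
        apply Int.isCoprime_iff_gcd_eq_one.mp
        exact hmncop.of_isCoprime_of_dvd_right ⟨2, by ring⟩
      have hn''0 : 0 < n'' := by linarith
      obtain ⟨u, hu⟩ := Int.sq_of_gcd_eq_one hmcop hk
      have hu' : m = u ^ 2 := by
        rcases hu with h' | h'
        · exact h'
        · exfalso; nlinarith [sq_nonneg u]
      rw [Int.gcd_comm] at hmcop
      rw [mul_comm] at hk
      obtain ⟨v, hv⟩ := Int.sq_of_gcd_eq_one hmcop hk
      have hv' : n'' = v ^ 2 := by
        rcases hv with h' | h'
        · exact h'
        · exfalso; nlinarith [sq_nonneg v]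
      have huodd : u % 2 = 1 := by
        rcases Int.emod_two_eq u with h' | h'
        · exfalso
          obtain ⟨t, ht'⟩ : (2:ℤ) ∣ u := Int.dvd_of_emod_eq_zero h'
          have h2 : m = 2 * (2 * t ^ 2) := by rw [hu', ht']; ring
          rw [h2, Int.mul_emod_right] at hmo
          norm_num at hmo
        · exact h'
      have hv0 : v ≠ 0 := by
        intro h0; rw [h0] at hv'; simp at hv'; omega
      have hguv : Int.gcd u v = 1 := by
        apply Int.isCoprime_iff_gcd_eq_one.mp
        apply coprime_of_sq_coprime
        rw [← hu', ← hv']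
        exact (Int.isCoprime_iff_gcd_eq_one.mpr hmcop).symm
      have heq2 : A ^ 2 = u ^ 4 + 4 * v ^ 4 := by
        rw [hu', hv'] at k3
        linear_combination k3
      obtain ⟨e, f, w, hg', hf', hw', heq', hlt'⟩ := step_u4_4v4 hA hguv huodd hv0 heq2
      refine ih e.natAbs ?_ e f w rfl hg' hf' hw' heq'
      rw [hAdef] at hlt'
      exact_mod_cast hlt'
  · -- b odd
    have hbb : b ^ 2 % 2 = 1 := by rw [sq, Int.mul_emod, hb2]; decide
    have ht : PythagoreanTriple (b ^ 2) c (A ^ 2) := by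
      delta PythagoreanTriple
      linear_combination (-1 : ℤ) * h - hA4
    have hgbc : Int.gcd (b ^ 2) c = 1 := Int.isCoprime_iff_gcd_eq_one.mp (hbc.pow_left)
    obtain ⟨m, n', hm1, hm2, hm3, hm4, _, hm6⟩ :=
      ht.coprime_classification' hgbc hbb (by positivity)
    have hn'0 : n' ≠ 0 := by
      rintro rfl
      simp at hm2
      exact hc hm2
    have hAb : A * b ≠ 0 := mul_ne_zero (ne_of_gt hA) hb
    have hnew : m ^ 4 = n' ^ 4 + (A * b) ^ 2 := by
      linear_combination -(m ^ 2 + n' ^ 2) * hm1 - b ^ 2 * hm3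
    have hlt : m.natAbs < a.natAbs := by
      have hn2 : 0 < n' ^ 2 := by positivity
      have h1 : m < A := by nlinarith
      have h2 : (m.natAbs : ℤ) = m := Int.natAbs_of_nonneg hm6
      have : (m.natAbs : ℤ) < (a.natAbs : ℤ) := by rw [h2]; exact h1
      exact_mod_cast this
    exact ih m.natAbs hlt m n' (A * b) rfl hm4 hn'0 hAb hnew



private lemma no_both_odd {x y z : ℤ} (hx : x % 2 = 1) (hy : y % 2 = 1)
    (heq : x ^ 4 + 6 * x ^ 2 * y ^ 2 + y ^ 4 = z ^ 2) : False := by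
  obtain ⟨k, rfl⟩ := Int.odd_iff.mpr hx
  obtain ⟨l, rfl⟩ := Int.odd_iff.mpr hy
  set T : ℤ := k^4+2*k^3+l^4+2*l^3+3*k^2+3*l^2+2*k+2*l+6*k^2*l^2+6*k^2*l+6*k*l^2+6*k*l with hT
  have hz2 : z ^ 2 = 16 * T + 8 := by rw [hT]; linear_combination (-1 : ℤ) * heq
  rcases Int.even_or_odd z with ⟨w, rfl⟩ | ⟨w, rfl⟩
  · have hww : w * w = 4 * T + 2 := by
      apply (mul_right_inj' (by norm_num : (4:ℤ) ≠ 0)).mp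
      linear_combination hz2
    exact Int.sq_ne_two_mod_four w (by rw [hww]; omega)
  · have h4 : 4 * (w * w + w) + 1 = 16 * T + 8 := by linear_combination hz2
    omega

private lemma no_sq_eight (z : ℤ) : z ^ 2 ≠ 8 := by
  intro h
  rcases Int.even_or_odd z with ⟨w, rfl⟩ | ⟨w, rfl⟩
  · have hww : w * w = 2 := by
      apply (mul_right_inj' (by norm_num : (4:ℤ) ≠ 0)).mp
      linear_combination h
    exact Int.sq_ne_two_mod_four w (by rw [hww]; decide)
  · have h4 : 4 * (w * w + w) + 1 = 8 := by linear_combination h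
    omega

theorem quartic_x4_add_6x2y2_add_y4_only_trivial
    (x y z : ℤ)
    (hgcd : Int.gcd x y = 1)
    (heq : x ^ 4 + 6 * x ^ 2 * y ^ 2 + y ^ 4 = z ^ 2) :
    x * y = 0 := by
  by_contra hxy
  have hx0 : x ≠ 0 := fun h => hxy (by rw [h, zero_mul])
  have hy0 : y ≠ 0 := fun h => hxy (by rw [h, mul_zero])
  have hcop : IsCoprime x y := Int.isCoprime_iff_gcd_eq_one.mpr hgcd
  -- z ≠ 0
  have hz0 : z ≠ 0 := by
    rintro rfl
    have : (0:ℤ) < x ^ 4 + 6 * x ^ 2 * y ^ 2 + y ^ 4 := by positivity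
    simp at heq
    nlinarith
  -- x^2 ≠ y^2
  have hx2y2 : x ^ 2 ≠ y ^ 2 := by
    intro hsq
    have hfac : (x - y) * (x + y) = 0 := by linear_combination hsq
    have hnat : x.natAbs = y.natAbs := by
      rcases mul_eq_zero.mp hfac with h' | h'
      · have : x = y := by linarith
        rw [this]
      · have : x = -y := by linarith
        rw [this, Int.natAbs_neg]
    have hgx : x.natAbs = 1 := by
      have : Int.gcd x y = x.natAbs := by
        unfold Int.gcd
        rw [hnat, Nat.gcd_self]
      omega
    have hx2 : x ^ 2 = 1 := by
      rcases Int.natAbs_eq x with h' | h' <;> rw [h', hgx] <;> norm_num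
    have hy2 : y ^ 2 = 1 := by rw [← hsq]; exact hx2
    have : z ^ 2 = 8 := by
      have hx4 : x ^ 4 = 1 := by nlinarith
      have hy4 : y ^ 4 = 1 := by nlinarith
      nlinarith
    exact no_sq_eight z this
  -- x, y have opposite parity
  have hodd : Odd (x ^ 2 + y ^ 2) := by
    rcases Int.even_or_odd x with hex | hox
    · rcases Int.even_or_odd y with hey | hoy
      · exfalso
        have h2x : (2:ℤ) ∣ x := hex.two_dvd
        have h2y : (2:ℤ) ∣ y := hey.two_dvd
        have := Int.dvd_gcd h2x h2y
        rw [hgcd] at this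
        norm_num at this
      · exact (hex.pow_of_ne_zero two_ne_zero).add_odd (hoy.pow)
    · rcases Int.even_or_odd y with hey | hoy
      · exact (hox.pow).add_even (hey.pow_of_ne_zero two_ne_zero)
      · exact absurd heq (fun h => no_both_odd (Int.odd_iff.mp hox) (Int.odd_iff.mp hoy) h)
  -- set up Fermat-type solution
  have hgAB : Int.gcd (x ^ 2 + y ^ 2) (2 * (x * y)) = 1 := by
    apply Int.isCoprime_iff_gcd_eq_one.mp
    have h2 : IsCoprime (x ^ 2 + y ^ 2) 2 := by
      apply IsCoprime.symm
      apply (Int.prime_two.coprime_iff_not_dvd).mpr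
      intro hd
      obtain ⟨t, ht⟩ := hd
      have hev : Even (x ^ 2 + y ^ 2) := ⟨t, by omega⟩
      exact (Int.not_odd_iff_even.mpr hev) hodd
    exact h2.mul_right (Int.isCoprime_of_sq_sum' hcop)
  have hB0 : 2 * (x * y) ≠ 0 := by
    exact mul_ne_zero two_ne_zero (mul_ne_zero hx0 hy0)
  have hC0 : z * (x ^ 2 - y ^ 2) ≠ 0 :=
    mul_ne_zero hz0 (sub_ne_zero.mpr hx2y2)
  have hfermat : (x ^ 2 + y ^ 2) ^ 4 = (2 * (x * y)) ^ 4 + (z * (x ^ 2 - y ^ 2)) ^ 2 := by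
    linear_combination (x ^ 2 - y ^ 2) ^ 2 * heq
  exact absurd hfermat (fun h =>
    no_fermat_descent _ _ _ _ rfl hgAB hB0 hC0 h)
end

section
/- If integers x, y, z satisfy x⁴ + 4y⁴ = z² with gcd(x, 2y) = 1 and y ≠ 0, then the resolvent system has a nontrivial solution: there exist integers λ, γ, λ', γ' with gcd(λ,γ) = 1, gcd(λ',γ') = 1, λ² − γ² = λ'² + γ'², λ·γ = λ'·γ', and λ·γ ≠ 0. -/
private lemma sqmod4 (k : ℤ) : ∃ t, k ^ 2 = 4 * t ∨ k ^ 2 = 4 * t + 1 := by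
  rcases Int.even_or_odd' k with ⟨j, hj | hj⟩
  · exact ⟨j ^ 2, Or.inl (by rw [hj]; ring)⟩
  · exact ⟨j ^ 2 + j, Or.inr (by rw [hj]; ring)⟩

theorem quartic_to_resolvent
    (x y z : ℤ)
    (heq : x ^ 4 + 4 * y ^ 4 = z ^ 2)
    (hgcd : Int.gcd x (2 * y) = 1)
    (hy : y ≠ 0) :
    ∃ l g l' g' : ℤ, Int.gcd l g = 1 ∧ Int.gcd l' g' = 1 ∧
      l ^ 2 - g ^ 2 = l' ^ 2 + g' ^ 2 ∧ l * g = l' * g' ∧ l * g ≠ 0 := by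
  -- x is coprime to 2y
  have hxc : IsCoprime x (2 * y) := Int.isCoprime_iff_gcd_eq_one.mpr hgcd
  have hx2 : IsCoprime x 2 := hxc.of_isCoprime_of_dvd_right ⟨y, rfl⟩
  have hxy : IsCoprime x y := hxc.of_isCoprime_of_dvd_right ⟨2, mul_comm 2 y⟩
  -- x is odd
  have hxodd : Odd x := by
    rw [← Int.not_even_iff_odd]
    intro hev
    have : IsUnit (2 : ℤ) := hx2.isUnit_of_dvd' hev.two_dvd dvd_rfl
    rw [Int.isUnit_iff] at this
    omega
  have hxne : x ≠ 0 := by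
    intro h; rw [h] at hxodd; exact (Int.not_even_iff_odd.mpr hxodd) Even.zero
  -- primitive Pythagorean triple (x^2, 2y^2, z)
  have hT1 : PythagoreanTriple (x ^ 2) (2 * y ^ 2) z := by
    unfold PythagoreanTriple
    linear_combination heq
  have hg1 : Int.gcd (x ^ 2) (2 * y ^ 2) = 1 := by
    rw [← Int.isCoprime_iff_gcd_eq_one]
    exact (hx2.mul_right (hxy.pow_right)).pow_left
  obtain ⟨m, n, hmn1, _, hmncop, _⟩ :=
    (PythagoreanTriple.coprime_classification.mp ⟨hT1, hg1⟩)
  -- rule out the even case for x^2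
  have hx2odd : Odd (x ^ 2) := hxodd.pow
  rcases hmn1 with ⟨hm, hn⟩ | ⟨hm, hn⟩
  swap
  · exfalso
    have : Even (x ^ 2) := ⟨m * n, by rw [hm]; ring⟩
    exact (Int.not_odd_iff_even.mpr this) hx2odd
  -- y^2 = m * n
  have hy2 : y ^ 2 = m * n := by linarith [hn]
  have hy2pos : 0 < y ^ 2 := by positivity
  have hmnpos : 0 < m * n := hy2 ▸ hy2pos
  -- WLOG m, n > 0
  have key : ∃ m n : ℤ, 0 < m ∧ 0 < n ∧ x ^ 2 = m ^ 2 - n ^ 2 ∧ y ^ 2 = m * n ∧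
      Int.gcd m n = 1 := by
    rcases lt_trichotomy m 0 with hmneg | hm0 | hmpos
    · have hnneg : n < 0 := by nlinarith
      exact ⟨-m, -n, by linarith, by linarith, by rw [hm]; ring,
        by rw [hy2]; ring, by rw [Int.neg_gcd, Int.gcd_neg]; exact hmncop⟩
    · exfalso; rw [hm0] at hmnpos; simp at hmnpos
    · have hnpos : 0 < n := by nlinarith
      exact ⟨m, n, hmpos, hnpos, hm, hy2, hmncop⟩
  clear hm hn hy2 hmnpos hmncop
  obtain ⟨m, n, hmpos, hnpos, hm, hy2, hmncop⟩ := key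
  have hcopmn : IsCoprime m n := Int.isCoprime_iff_gcd_eq_one.mpr hmncop
  -- m and n are squares
  obtain ⟨a, ha | ha⟩ := Int.sq_of_isCoprime hcopmn hy2.symm
  swap
  · exfalso; nlinarith
  obtain ⟨b, hb | hb⟩ := Int.sq_of_isCoprime hcopmn.symm (by rw [mul_comm]; exact hy2.symm)
  swap
  · exfalso; nlinarith
  have hbne : b ≠ 0 := by intro h; rw [h] at hb; simp at hb; omega
  have hane : a ≠ 0 := by intro h; rw [h] at ha; simp at ha; omega
  -- coprimality of a and b
  have Hm : IsCoprime (a ^ 2) (b ^ 2) := by rw [← ha, ← hb]; exact hcopmn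
  have hab : IsCoprime a b :=
    (Hm.of_isCoprime_of_dvd_left (dvd_pow_self a two_ne_zero)).of_isCoprime_of_dvd_right
      (dvd_pow_self b two_ne_zero)
  -- x^2 = (a^2-b^2)(a^2+b^2)
  have huv : (a ^ 2 - b ^ 2) * (a ^ 2 + b ^ 2) = x ^ 2 := by
    rw [hm, ha, hb]; ring
  have hvpos : 0 < a ^ 2 + b ^ 2 := by positivity
  have hx2pos : 0 < x ^ 2 :=
    lt_of_le_of_ne (sq_nonneg x) (Ne.symm (pow_ne_zero 2 hxne))
  have hupos : 0 < a ^ 2 - b ^ 2 := by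
    rcases lt_trichotomy (a ^ 2 - b ^ 2) 0 with h | h | h
    · exfalso; nlinarith [hx2pos]
    · exfalso; nlinarith [hx2pos]
    · exact h
  -- both factors odd
  have hoddu : Odd (a ^ 2 - b ^ 2) ∧ Odd (a ^ 2 + b ^ 2) := by
    rw [← Int.odd_mul, huv]; exact hxodd.pow
  -- the two factors are coprime
  have hcopuv : IsCoprime (a ^ 2 - b ^ 2) (a ^ 2 + b ^ 2) := by
    rw [Int.isCoprime_iff_gcd_eq_one]
    by_contra hne
    obtain ⟨p, hp, hpd⟩ := Nat.exists_prime_and_dvd hne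
    have hpu : (p : ℤ) ∣ a ^ 2 - b ^ 2 :=
      dvd_trans (Int.natCast_dvd_natCast.mpr hpd) (Int.gcd_dvd_left _ _)
    have hpv : (p : ℤ) ∣ a ^ 2 + b ^ 2 :=
      dvd_trans (Int.natCast_dvd_natCast.mpr hpd) (Int.gcd_dvd_right _ _)
    have hpprime : Prime (p : ℤ) := Nat.prime_iff_prime_int.mp hp
    have hpnot2 : ¬ (p : ℤ) ∣ 2 := by
      intro h2
      have hpn : p ∣ 2 := by exact_mod_cast h2
      have hp2 : p = 2 := (Nat.prime_dvd_prime_iff_eq hp Nat.prime_two).mp hpn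
      have h2u := hpu
      rw [hp2] at h2u
      have h2u' : (2 : ℤ) ∣ a ^ 2 - b ^ 2 := by exact_mod_cast h2u
      obtain ⟨k, hk⟩ := h2u'
      have hevu : Even (a ^ 2 - b ^ 2) := ⟨k, by rw [hk]; ring⟩
      exact (Int.not_odd_iff_even.mpr hevu) hoddu.1
    have hpa : (p : ℤ) ∣ a ^ 2 := by
      have h2a : (p : ℤ) ∣ 2 * a ^ 2 := by
        have := dvd_add hpu hpv
        rw [show (2 : ℤ) * a ^ 2 = a ^ 2 - b ^ 2 + (a ^ 2 + b ^ 2) by ring]; exact this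
      rcases hpprime.dvd_mul.mp h2a with h | h
      · exact absurd h hpnot2
      · exact h
    have hpb : (p : ℤ) ∣ b ^ 2 := by
      have h2b : (p : ℤ) ∣ 2 * b ^ 2 := by
        have := dvd_sub hpv hpu
        rw [show (2 : ℤ) * b ^ 2 = a ^ 2 + b ^ 2 - (a ^ 2 - b ^ 2) by ring]; exact this
      rcases hpprime.dvd_mul.mp h2b with h | h
      · exact absurd h hpnot2
      · exact h
    obtain ⟨α, β, hαβ⟩ := Hm
    have : (p : ℤ) ∣ 1 := by
      rw [← hαβ]
      exact dvd_add (Dvd.dvd.mul_left hpa α) (Dvd.dvd.mul_left hpb β)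
    exact hpprime.not_dvd_one this
  -- both factors are squares
  obtain ⟨d, hd | hd⟩ := Int.sq_of_isCoprime hcopuv huv
  swap
  · exfalso; nlinarith
  obtain ⟨c, hc | hc⟩ := Int.sq_of_isCoprime hcopuv.symm (by rw [mul_comm]; exact huv)
  swap
  · exfalso; nlinarith
  -- so a^2 - b^2 = d^2 and a^2 + b^2 = c^2
  -- parity: a odd, b even
  have hnotboth : ¬ (Even a ∧ Even b) := by
    rintro ⟨⟨a1, ha1⟩, ⟨b1, hb1⟩⟩
    have : IsUnit (2 : ℤ) := hab.isUnit_of_dvd' ⟨a1, by omega⟩ ⟨b1, by omega⟩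
    rw [Int.isUnit_iff] at this; omega
  have haodd : Odd a ∧ Even b := by
    rcases Int.even_or_odd a with hea | hoa
    · -- a even: then b odd, contradiction mod 4 via d
      exfalso
      have hob : Odd b := by
        rcases Int.even_or_odd b with heb | hob
        · exact absurd ⟨hea, heb⟩ hnotboth
        · exact hob
      obtain ⟨a1, ha1⟩ := hea
      obtain ⟨b1, hb1⟩ := hob
      have h3 : d ^ 2 = 4 * (a1 ^ 2 - b1 ^ 2 - b1 - 1) + 3 := by
        rw [← hd, ha1, hb1]; ring
      obtain ⟨t, ht | ht⟩ := sqmod4 d <;> rw [ht] at h3 <;> omega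
    · rcases Int.even_or_odd b with heb | hob
      · exact ⟨hoa, heb⟩
      · -- both odd: contradiction mod 4 via c
        exfalso
        obtain ⟨a1, ha1⟩ := hoa
        obtain ⟨b1, hb1⟩ := hob
        have h3 : c ^ 2 = 4 * (a1 ^ 2 + a1 + b1 ^ 2 + b1) + 2 := by
          rw [← hc, ha1, hb1]; ring
        obtain ⟨t, ht | ht⟩ := sqmod4 c <;> rw [ht] at h3 <;> omega
  obtain ⟨hoa, heb⟩ := haodd
  -- first triple: a^2 + b^2 = c^2
  have hT2 : PythagoreanTriple a b c := by
    unfold PythagoreanTriple; linear_combination hc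
  have hgab : Int.gcd a b = 1 := Int.isCoprime_iff_gcd_eq_one.mp hab
  obtain ⟨s, t, hst1, _, hstcop, _⟩ :=
    PythagoreanTriple.coprime_classification.mp ⟨hT2, hgab⟩
  rcases hst1 with ⟨has, hbs⟩ | ⟨has, hbs⟩
  swap
  · exfalso
    have : Even a := ⟨s * t, by rw [has]; ring⟩
    exact (Int.not_odd_iff_even.mpr this) hoa
  -- second triple: d^2 + b^2 = a^2
  have hdb : IsCoprime d b := by
    have h1 : IsCoprime (a ^ 2) b := hab.pow_left
    have h2 : IsCoprime (a ^ 2 - b ^ 2 + b * b) b := by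
      convert h1 using 2; ring
    have h3 : IsCoprime (a ^ 2 - b ^ 2) b := h2.of_add_mul_left_left
    rw [hd] at h3
    exact h3.of_isCoprime_of_dvd_left (dvd_pow_self d two_ne_zero)
  have hT3 : PythagoreanTriple d b a := by
    unfold PythagoreanTriple; linear_combination -hd
  have hgdb : Int.gcd d b = 1 := Int.isCoprime_iff_gcd_eq_one.mp hdb
  obtain ⟨u, v, huv1, hza, huvcop, hpar2⟩ :=
    PythagoreanTriple.coprime_classification.mp ⟨hT3, hgdb⟩
  rcases huv1 with ⟨hdu, hbu⟩ | ⟨hdu, hbu⟩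
  swap
  · exfalso
    have hoduv : Odd (u ^ 2 - v ^ 2) := by
      rcases hpar2 with ⟨hu, hv⟩ | ⟨hu, hv⟩
      · obtain ⟨k, hk⟩ := Int.even_iff.mpr hu
        obtain ⟨j, hj⟩ := Int.odd_iff.mpr hv
        exact ⟨2 * k ^ 2 - 2 * j ^ 2 - 2 * j - 1, by rw [hk, hj]; ring⟩
      · obtain ⟨k, hk⟩ := Int.odd_iff.mpr hu
        obtain ⟨j, hj⟩ := Int.even_iff.mpr hv
        exact ⟨2 * k ^ 2 + 2 * k - 2 * j ^ 2, by rw [hk, hj]; ring⟩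
    rw [← hbu] at hoduv
    exact (Int.not_odd_iff_even.mpr heb) hoduv
  -- now: a = s^2 - t^2, b = 2 s t, b = 2 u v, a = ±(u^2+v^2)
  have hstuv : s * t = u * v := by
    have h2 : 2 * (s * t) = 2 * (u * v) := by
      rw [hbs] at hbu; linarith [hbu]
    exact mul_left_cancel₀ two_ne_zero h2
  have hbneq : b ≠ 0 := by
    intro h; rw [h] at hb; simp at hb; omega
  have hstne : s * t ≠ 0 := by
    intro h
    apply hbneq
    rw [hbs]
    linear_combination 2 * h
  rcases hza with hzaeq | hzaeq
  · exact ⟨s, t, u, v, hstcop, huvcop,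
      by rw [← has, hzaeq], hstuv, hstne⟩
  · refine ⟨t, s, u, v, by rw [Int.gcd_comm]; exact hstcop, huvcop,
      ?_, by rw [mul_comm]; exact hstuv, by rw [mul_comm]; exact hstne⟩
    have : s ^ 2 - t ^ 2 = -(u ^ 2 + v ^ 2) := by rw [← has, hzaeq]
    linarith
end

section
/- If integers x, y, z satisfy x⁴ + 4y⁴ = z² with gcd(x, 2y) = 1 and y ≠ 0, then there exist integers s and t with gcd(s,t) = 1, s·t ≠ 0, t even, and x² = s⁴ − t⁴. -/
theorem quartic_to_difference_of_fourth_powers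
    (x y z : ℤ)
    (heq : x ^ 4 + 4 * y ^ 4 = z ^ 2)
    (hgcd : Int.gcd x (2 * y) = 1)
    (hy : y ≠ 0) :
    ∃ s t : ℤ, Int.gcd s t = 1 ∧ s * t ≠ 0 ∧ Even t ∧
      x ^ 2 = s ^ 4 - t ^ 4 := by
  have hc : IsCoprime x (2 * y) := Int.isCoprime_iff_gcd_eq_one.mpr hgcd
  have hc2 : IsCoprime x 2 := hc.of_mul_right_left
  have hcy : IsCoprime x y := hc.of_mul_right_right
  have hxodd : ¬ (2 ∣ x) := by
    intro h2
    have : ¬ IsUnit (2 : ℤ) := by decide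
    exact this (hc2.isUnit_of_dvd' h2 dvd_rfl)
  have hx0 : x ≠ 0 := by rintro rfl; exact hxodd ⟨0, rfl⟩
  have PT : PythagoreanTriple (x ^ 2) (2 * y ^ 2) z := by
    show x ^ 2 * x ^ 2 + 2 * y ^ 2 * (2 * y ^ 2) = z * z
    linear_combination heq
  have hgcd' : Int.gcd (x ^ 2) (2 * y ^ 2) = 1 := by
    apply Int.isCoprime_iff_gcd_eq_one.mp
    have h1 : IsCoprime x (2 * y ^ 2) := by
      have : IsCoprime x (y ^ 2) := (hcy.pow_right)
      exact hc2.mul_right this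
    have h2 : IsCoprime (x ^ 2) (2 * y ^ 2) := h1.pow_left
    exact h2
  obtain ⟨m, n, hcase, hz, hmn, hpar⟩ :=
    PythagoreanTriple.coprime_classification.mp ⟨PT, hgcd'⟩
  -- rule out x^2 = 2*m*n
  rcases hcase with ⟨hx2, hy2⟩ | ⟨hx2, hy2⟩
  swap
  · exfalso
    have h2x : (2 : ℤ) ∣ x ^ 2 := ⟨m * n, by linarith⟩
    exact hxodd (Int.prime_two.dvd_of_dvd_pow h2x)
  -- rule out m even, n odd
  have hx4 : x ^ 2 % 4 = 1 := by
    obtain ⟨k, hk⟩ : ∃ k, x = 2 * k + 1 := ⟨x / 2, by omega⟩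
    have : x ^ 2 = 4 * (k * k + k) + 1 := by rw [hk]; ring
    rw [this]
    generalize k * k + k = j
    omega
  have hnev : m % 2 = 1 ∧ n % 2 = 0 := by
    rcases hpar with ⟨hm, hn⟩ | h
    · exfalso
      obtain ⟨a, ha⟩ : ∃ a, m = 2 * a := ⟨m / 2, by omega⟩
      obtain ⟨b, hb⟩ : ∃ b, n = 2 * b + 1 := ⟨n / 2, by omega⟩
      have : x ^ 2 = 4 * (a * a - b * b - b) - 1 := by
        rw [hx2, ha, hb]; ring
      rw [this] at hx4
      generalize a * a - b * b - b = j at hx4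
      omega
    · exact h
  have hy2' : y ^ 2 = m * n := by linarith
  have hmn0 : 0 < m * n := by
    rw [← hy2']; positivity
  -- normalize to positive m, n
  obtain ⟨m, n, hx2, hy2', hmn, hnev, hm0, hn0⟩ :
      ∃ m n : ℤ, x ^ 2 = m ^ 2 - n ^ 2 ∧ y ^ 2 = m * n ∧ Int.gcd m n = 1 ∧
        n % 2 = 0 ∧ 0 < m ∧ 0 < n := by
    rcases lt_trichotomy m 0 with hm | hm | hm
    · have hn : n < 0 := by nlinarith
      exact ⟨-m, -n, by rw [hx2]; ring, by rw [hy2']; ring,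
        by rw [Int.gcd]; rw [Int.gcd] at hmn; simpa using hmn, by omega, by omega, by omega⟩
    · exfalso; rw [hm] at hmn0; simp at hmn0
    · have hn : 0 < n := by nlinarith
      exact ⟨m, n, hx2, hy2', hmn, hnev.2, hm, hn⟩
  have hcmn : IsCoprime m n := Int.isCoprime_iff_gcd_eq_one.mpr hmn
  obtain ⟨s, hs⟩ := Int.sq_of_isCoprime hcmn hy2'.symm
  obtain ⟨t, ht⟩ := Int.sq_of_isCoprime hcmn.symm (by rw [mul_comm]; exact hy2'.symm)
  have hs' : m = s ^ 2 := by
    rcases hs with h | h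
    · exact h
    · exfalso; nlinarith [sq_nonneg s]
  have ht' : n = t ^ 2 := by
    rcases ht with h | h
    · exact h
    · exfalso; nlinarith [sq_nonneg t]
  have hs0 : s ≠ 0 := by rintro rfl; simp [hs'] at hm0
  have ht0 : t ≠ 0 := by rintro rfl; simp [ht'] at hn0
  have hst : IsCoprime s t := by
    have h1 : IsCoprime (s ^ 2) (t ^ 2) := by rw [← hs', ← ht']; exact hcmn
    exact (IsCoprime.of_isCoprime_of_dvd_left
      (IsCoprime.of_isCoprime_of_dvd_right h1 (dvd_pow_self t two_ne_zero))
      (dvd_pow_self s two_ne_zero))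
  have htev : Even t := by
    have h2 : (2 : ℤ) ∣ t ^ 2 := by rw [← ht']; omega
    have := Int.prime_two.dvd_of_dvd_pow h2
    exact (Int.even_iff).mpr (by omega)
  refine ⟨s, t, Int.isCoprime_iff_gcd_eq_one.mp hst, mul_ne_zero hs0 ht0, htev, ?_⟩
  rw [hx2, hs', ht']; ring
end

section
/- If the resolvent system has a nontrivial integer solution, i.e. there exist integers λ, γ, λ', γ' with gcd(λ,γ) = 1, gcd(λ',γ') = 1, λ² − γ² = λ'² + γ'², λ·γ = λ'·γ', and λ·γ ≠ 0, then there exist integers x, y, z with gcd(x, 2y) = 1, y ≠ 0, and x⁴ + 4y⁴ = z². -/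
/-- Base step: coprime `p, q` with `q` even, `p² + q² = r²`, `p*q = 2w²`, `w ≠ 0`
produce a solution of `x⁴ + 4y⁴ = z²`. -/
lemma aux0 (p q r w : ℤ) (hpq : IsCoprime p q) (h1 : p ^ 2 + q ^ 2 = r ^ 2)
    (h2 : p * q = 2 * w ^ 2) (hw : w ≠ 0) (hq : Even q) :
    ∃ x y z : ℤ, Int.gcd x (2 * y) = 1 ∧ y ≠ 0 ∧
      x ^ 4 + 4 * y ^ 4 = z ^ 2 := by
  obtain ⟨q₁, rfl⟩ : ∃ q₁, q = 2 * q₁ := by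
    obtain ⟨m, hm⟩ := hq; exact ⟨m, by linarith⟩
  have hpq1 : IsCoprime p q₁ := hpq.of_isCoprime_of_dvd_right ⟨2, by ring⟩
  have hw2 : p * q₁ = w ^ 2 := by linarith
  obtain ⟨t, ht⟩ := Int.sq_of_isCoprime hpq1 hw2
  obtain ⟨s, hs⟩ := Int.sq_of_isCoprime hpq1.symm (by linarith : q₁ * p = w ^ 2)
  have hp2 : p ^ 2 = t ^ 4 := by rcases ht with h | h <;> rw [h] <;> ring
  have hq2 : q₁ ^ 2 = s ^ 4 := by rcases hs with h | h <;> rw [h] <;> ring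
  have hq1ne : q₁ ≠ 0 := by
    intro h0
    apply hw
    have : w ^ 2 = 0 := by rw [← hw2, h0, mul_zero]
    exact pow_eq_zero_iff (by norm_num) |>.mp this
  refine ⟨t, s, r, ?_, ?_, ?_⟩
  · rw [← Int.isCoprime_iff_gcd_eq_one]
    have hts2 : IsCoprime (t ^ 2) (s ^ 2) := by
      rcases ht with h | h <;> rcases hs with h' | h' <;> rw [h, h'] at hpq1 <;>
        simpa [IsCoprime.neg_left_iff, IsCoprime.neg_right_iff] using hpq1
    have ht22 : IsCoprime (t ^ 2) 2 := by
      have : IsCoprime p 2 := hpq.of_isCoprime_of_dvd_right ⟨q₁, by ring⟩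
      rcases ht with h | h <;> rw [h] at this <;> simpa [IsCoprime.neg_left_iff] using this
    have hts : IsCoprime t s :=
      (IsCoprime.pow_left_iff (by norm_num)).mp
        ((IsCoprime.pow_right_iff (by norm_num)).mp hts2)
    have ht2 : IsCoprime t 2 := (IsCoprime.pow_left_iff (by norm_num)).mp ht22
    exact ht2.mul_right hts
  · intro h0
    apply hq1ne
    rcases hs with h | h <;> rw [h, h0] <;> ring
  · linear_combination h1 - hp2 - 4 * hq2

/-- Step: coprime `p, q` with `p² + q² = r²`, `p*q = 2w²`, `w ≠ 0`. -/
lemma aux1 (p q r w : ℤ) (hpq : IsCoprime p q) (h1 : p ^ 2 + q ^ 2 = r ^ 2)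
    (h2 : p * q = 2 * w ^ 2) (hw : w ≠ 0) :
    ∃ x y z : ℤ, Int.gcd x (2 * y) = 1 ∧ y ≠ 0 ∧
      x ^ 4 + 4 * y ^ 4 = z ^ 2 := by
  have hev : Even p ∨ Even q := by
    have : Even (p * q) := ⟨w ^ 2, by linarith⟩
    exact Int.even_mul.mp this
  rcases hev with hp | hq
  · exact aux0 q p r w hpq.symm (by linarith) (by linarith) hw hp
  · exact aux0 p q r w hpq h1 h2 hw hq

/-- Step: coprime `x, y` with `x² + y² = 2u²` and `x² − y² = 2v²`, `v ≠ 0`. -/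
lemma aux2 (x y u v : ℤ) (hxy : IsCoprime x y) (h1 : x ^ 2 + y ^ 2 = 2 * u ^ 2)
    (h2 : x ^ 2 - y ^ 2 = 2 * v ^ 2) (hv : v ≠ 0) :
    ∃ X Y Z : ℤ, Int.gcd X (2 * Y) = 1 ∧ Y ≠ 0 ∧
      X ^ 4 + 4 * Y ^ 4 = Z ^ 2 := by
  have hparity : Even x ↔ Even y := by
    have hev : Even (x ^ 2 + y ^ 2) := ⟨u ^ 2, by linarith⟩
    have := Int.even_add.mp hev
    constructor
    · intro hx
      exact (Int.even_pow.mp (this.mp (Int.even_pow.mpr ⟨hx, by norm_num⟩))).1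
    · intro hy
      exact (Int.even_pow.mp (this.mpr (Int.even_pow.mpr ⟨hy, by norm_num⟩))).1
  have hxyadd : Even (x + y) := Int.even_add.mpr hparity
  have hxysub : Even (x - y) := Int.even_sub.mpr hparity
  obtain ⟨p, hp⟩ := hxyadd
  obtain ⟨q, hq⟩ := hxysub
  have hx : x = p + q := by omega
  have hy : y = p - q := by omega
  subst hx; subst hy
  have hpq : IsCoprime p q := by
    obtain ⟨a, b, hab⟩ := hxy
    exact ⟨a + b, a - b, by linear_combination hab⟩
  have h1' : p ^ 2 + q ^ 2 = u ^ 2 := by linarith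
  have h2' : 2 * (p * q) = v ^ 2 := by linarith
  have hvev : Even v := by
    have : Even (v ^ 2) := ⟨p * q, by linarith⟩
    exact (Int.even_pow.mp this).1
  obtain ⟨w, hw⟩ := hvev
  have hpqw : p * q = 2 * w ^ 2 := by
    have : v = 2 * w := by linarith
    rw [this] at h2'; linarith
  have hwne : w ≠ 0 := by
    intro h0; apply hv; rw [hw, h0]; ring
  exact aux1 p q u w hpq h1' hpqw hwne

theorem resolvent_to_quartic
    (h : ∃ l g l' g' : ℤ, Int.gcd l g = 1 ∧ Int.gcd l' g' = 1 ∧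
      l ^ 2 - g ^ 2 = l' ^ 2 + g' ^ 2 ∧ l * g = l' * g' ∧ l * g ≠ 0) :
    ∃ x y z : ℤ, Int.gcd x (2 * y) = 1 ∧ y ≠ 0 ∧
      x ^ 4 + 4 * y ^ 4 = z ^ 2 := by
  obtain ⟨l, g, l', g', hlg, hlg', heq, hprod, hne⟩ := h
  have hlgc : IsCoprime l g := Int.isCoprime_iff_gcd_eq_one.mpr hlg
  have hlgc' : IsCoprime l' g' := Int.isCoprime_iff_gcd_eq_one.mpr hlg'
  have hl : l ≠ 0 := fun h0 => hne (by rw [h0, zero_mul])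
  have hg : g ≠ 0 := fun h0 => hne (by rw [h0, mul_zero])
  have hne' : l' * g' ≠ 0 := hprod ▸ hne
  have hl' : l' ≠ 0 := fun h0 => hne' (by rw [h0, zero_mul])
  have hg' : g' ≠ 0 := fun h0 => hne' (by rw [h0, mul_zero])
  -- decompose l = a*c, l' = a*d with a = gcd l l'
  set a : ℤ := (Int.gcd l l' : ℤ) with ha_def
  have hgcdpos : 0 < Int.gcd l l' := by
    rcases Nat.eq_zero_or_pos (Int.gcd l l') with h0 | h0
    · exact absurd (Int.gcd_eq_zero_iff.mp h0).1 hl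
    · exact h0
  have ha : a ≠ 0 := by
    simp only [ha_def]
    exact_mod_cast hgcdpos.ne'
  obtain ⟨c, hc⟩ : a ∣ l := Int.gcd_dvd_left l l'
  obtain ⟨d, hd⟩ : a ∣ l' := Int.gcd_dvd_right l l'
  have hcd : IsCoprime c d := by
    have h1 := Int.gcd_div_gcd_div_gcd hgcdpos
    have hcl : l / a = c := by rw [hc]; exact Int.mul_ediv_cancel_left c ha
    have hdl : l' / a = d := by rw [hd]; exact Int.mul_ediv_cancel_left d ha
    rw [← ha_def, hcl, hdl] at h1
    exact Int.isCoprime_iff_gcd_eq_one.mpr h1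
  have hc0 : c ≠ 0 := fun h0 => hl (by rw [hc, h0, mul_zero])
  have hd0 : d ≠ 0 := fun h0 => hl' (by rw [hd, h0, mul_zero])
  -- c * g = d * g'
  have hcg : c * g = d * g' := by
    have : a * (c * g) = a * (d * g') := by
      rw [← mul_assoc, ← mul_assoc, ← hc, ← hd]; exact hprod
    exact mul_left_cancel₀ ha this
  -- d ∣ g
  obtain ⟨b, hb⟩ : d ∣ g := by
    exact hcd.symm.dvd_of_dvd_mul_left ⟨g', hcg⟩
  have hb0 : b ≠ 0 := fun h0 => hg (by rw [hb, h0, mul_zero])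
  have hg'cb : g' = c * b := by
    have : d * g' = d * (c * b) := by rw [← hcg, hb]; ring
    exact mul_left_cancel₀ hd0 this
  -- coprimalities
  have hab : IsCoprime a b :=
    (hlgc.of_isCoprime_of_dvd_left ⟨c, hc⟩).of_isCoprime_of_dvd_right ⟨d, by rw [hb]; ring⟩
  -- key equation
  have key : a ^ 2 * (c ^ 2 - d ^ 2) = b ^ 2 * (c ^ 2 + d ^ 2) := by
    rw [hc, hd, hb, hg'cb] at heq
    linear_combination heq
  -- a² ∣ c² + d²
  have hab2 : IsCoprime (a ^ 2) (b ^ 2) := hab.pow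
  obtain ⟨k, hk⟩ : a ^ 2 ∣ c ^ 2 + d ^ 2 := by
    exact hab2.dvd_of_dvd_mul_left ⟨c ^ 2 - d ^ 2, by linear_combination -key⟩
  have hk2 : c ^ 2 - d ^ 2 = b ^ 2 * k := by
    have : a ^ 2 * (c ^ 2 - d ^ 2) = a ^ 2 * (b ^ 2 * k) := by
      rw [key, hk]; ring
    exact mul_left_cancel₀ (pow_ne_zero 2 ha) this
  -- k ∣ 2
  have hkdvd : k ∣ 2 := by
    obtain ⟨u, v, huv⟩ := hcd.pow (m := 2) (n := 2)
    have h2eq : (2 : ℤ) = (u + v) * (c ^ 2 + d ^ 2) + (u - v) * (c ^ 2 - d ^ 2) := by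
      linear_combination -2 * huv
    rw [h2eq, hk, hk2]
    exact dvd_add ⟨(u + v) * a ^ 2, by ring⟩ ⟨(u - v) * b ^ 2, by ring⟩
  have hsumpos : 0 < c ^ 2 + d ^ 2 := by positivity
  have hkpos : 0 < k := by
    rcases lt_trichotomy k 0 with h0 | h0 | h0
    · nlinarith [sq_nonneg a, hk]
    · rw [h0, mul_zero] at hk; omega
    · exact h0
  have hkle : k ≤ 2 := Int.le_of_dvd (by norm_num) hkdvd
  have hk12 : k = 1 ∨ k = 2 := by omega
  rcases hk12 with rfl | rfl
  · -- c² + d² = a², c² - d² = b²  ⟹  a² + b² = 2c², a² - b² = 2d²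
    have hA : a ^ 2 + b ^ 2 = 2 * c ^ 2 := by linarith [hk, hk2]
    have hB : a ^ 2 - b ^ 2 = 2 * d ^ 2 := by linarith [hk, hk2]
    exact aux2 a b c d hab hA hB hd0
  · -- c² + d² = 2a², c² - d² = 2b²
    have hA : c ^ 2 + d ^ 2 = 2 * a ^ 2 := by linarith [hk]
    have hB : c ^ 2 - d ^ 2 = 2 * b ^ 2 := by linarith [hk2]
    exact aux2 c d a b hcd hA hB hb0
end

section
/- For any integers x, y, x', y' satisfying x² − y² = x'² + y'² and x·y = x'·y', the quantity x'⁴ + 6x'²y'² + y'⁴ is a perfect square; in fact x'⁴ + 6x'²y'² + y'⁴ = (x² + y²)². Consequently, if the resolvent system has a nontrivial solution, then x⁴ + 6x²y² + y⁴ = z² has an integer solution with gcd(x,y) = 1 and x·y ≠ 0. -/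
theorem resolvent_gives_square :
    (∀ x y x' y' : ℤ, x ^ 2 - y ^ 2 = x' ^ 2 + y' ^ 2 → x * y = x' * y' →
      x' ^ 4 + 6 * x' ^ 2 * y' ^ 2 + y' ^ 4 = (x ^ 2 + y ^ 2) ^ 2) ∧
    ((∃ x y x' y' : ℤ, x ^ 2 - y ^ 2 = x' ^ 2 + y' ^ 2 ∧ x * y = x' * y' ∧
        Int.gcd x y = 1 ∧ Int.gcd x' y' = 1 ∧ x * y ≠ 0) →
      ∃ x y z : ℤ, Int.gcd x y = 1 ∧ x * y ≠ 0 ∧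
        x ^ 4 + 6 * x ^ 2 * y ^ 2 + y ^ 4 = z ^ 2) := by
  constructor
  · intro x y x' y' h1 h2
    linear_combination (-(x^2-y^2+x'^2+y'^2))*h1 - 4*(x*y+x'*y')*h2
  · rintro ⟨x, y, x', y', h1, h2, _, hg', hne⟩
    refine ⟨x', y', x ^ 2 + y ^ 2, hg', by rw [← h2]; exact hne, ?_⟩
    linear_combination (-(x^2-y^2+x'^2+y'^2))*h1 - 4*(x*y+x'*y')*h2
end

section
/- If integers x, y, z satisfy x⁴ + 6x²y² + y⁴ = z² with gcd(x,y) = 1 and x·y ≠ 0, then the resolvent system has a nontrivial solution: there exist integers u, v with gcd(u,v) = 1, u² − v² = x² + y², u·v = x·y, and u·v ≠ 0. -/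
theorem quartic6_to_resolvent
    (x y z : ℤ)
    (heq : x ^ 4 + 6 * x ^ 2 * y ^ 2 + y ^ 4 = z ^ 2)
    (hgcd : Int.gcd x y = 1)
    (hxy : x * y ≠ 0) :
    ∃ u v : ℤ, Int.gcd u v = 1 ∧ u ^ 2 - v ^ 2 = x ^ 2 + y ^ 2 ∧
      u * v = x * y ∧ u * v ≠ 0 := by
  have hcop : IsCoprime x y := Int.isCoprime_iff_gcd_eq_one.mpr hgcd
  -- not both odd, by a mod 16 argument
  have hnotboth : ¬ (Odd x ∧ Odd y) := by
    rintro ⟨⟨a, ha⟩, ⟨b, hb⟩⟩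
    have key : ∀ a b c : ZMod 16,
        (2*a+1)^4 + 6*(2*a+1)^2*(2*b+1)^2 + (2*b+1)^4 ≠ c^2 := by decide
    have h16 : ((x:ZMod 16))^4 + 6*(x:ZMod 16)^2*(y:ZMod 16)^2 + (y:ZMod 16)^4
        = (z:ZMod 16)^2 := by exact_mod_cast congrArg (fun t : ℤ => (t : ZMod 16)) heq
    have hxc : (x : ZMod 16) = 2*(a:ZMod 16)+1 := by rw [ha]; push_cast; ring
    have hyc : (y : ZMod 16) = 2*(b:ZMod 16)+1 := by rw [hb]; push_cast; ring
    rw [hxc, hyc] at h16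
    exact key _ _ _ h16
  -- not both even
  have hnotbothe : ¬ (Even x ∧ Even y) := by
    rintro ⟨hex, hey⟩
    have h2x : (2:ℤ) ∣ x := hex.two_dvd
    have h2y : (2:ℤ) ∣ y := hey.two_dvd
    have : (2:ℤ) ∣ 1 := by
      have := Int.dvd_coe_gcd h2x h2y
      rw [hgcd] at this; exact_mod_cast this
    norm_num at this
  have hodd : Odd (x ^ 2 + y ^ 2) := by
    rcases Int.even_or_odd x with hx | hx <;> rcases Int.even_or_odd y with hy | hy
    · exact absurd ⟨hx, hy⟩ hnotbothe
    · have hex2 : Even (x ^ 2) := by rw [sq]; exact hx.mul_right x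
      exact hex2.add_odd hy.pow
    · have hey2 : Even (y ^ 2) := by rw [sq]; exact hy.mul_right y
      exact hey2.odd_add hx.pow
    · exact absurd ⟨hx, hy⟩ hnotboth
  have hA : IsCoprime (x ^ 2 + y ^ 2) 2 := by
    refine (Int.prime_two.coprime_iff_not_dvd.mpr ?_).symm
    intro h
    exact (Int.not_even_iff_odd.mpr hodd) (even_iff_two_dvd.mpr h)
  have hB : IsCoprime (x ^ 2 + y ^ 2) x := by
    have h1 : IsCoprime (y ^ 2 + x * x) x := (hcop.symm.pow_left).add_mul_right_left x
    have : y ^ 2 + x * x = x ^ 2 + y ^ 2 := by ring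
    rwa [this] at h1
  have hC : IsCoprime (x ^ 2 + y ^ 2) y := by
    have h1 : IsCoprime (x ^ 2 + y * y) y := (hcop.pow_left).add_mul_right_left y
    have : x ^ 2 + y * y = x ^ 2 + y ^ 2 := by ring
    rwa [this] at h1
  have hcop2 : IsCoprime (x ^ 2 + y ^ 2) (2 * x * y) := by
    have := hA.mul_right (hB.mul_right hC)
    rwa [show (2:ℤ) * (x * y) = 2 * x * y by ring] at this
  have hgcd2 : Int.gcd (x ^ 2 + y ^ 2) (2 * x * y) = 1 :=
    Int.isCoprime_iff_gcd_eq_one.mp hcop2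
  have hpt : PythagoreanTriple (x ^ 2 + y ^ 2) (2 * x * y) z := by
    unfold PythagoreanTriple
    nlinarith [heq]
  obtain ⟨m, n, hmn, -, hmncop, -⟩ := PythagoreanTriple.coprime_classification.mp ⟨hpt, hgcd2⟩
  rcases hmn with ⟨h1, h2⟩ | ⟨h1, h2⟩
  · refine ⟨m, n, hmncop, h1.symm, by linarith, ?_⟩
    have : m * n = x * y := by linarith
    rw [this]; exact hxy
  · exfalso
    have : Even (x ^ 2 + y ^ 2) := ⟨m * n, by linarith⟩
    exact (Int.not_even_iff_odd.mpr hodd) this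
end

section
/- If integers x, y, x', y' satisfy the resolvent system, namely x² − y² = x'² + y'², x·y = x'·y', gcd(x,y) = 1, gcd(x',y') = 1, and x·y ≠ 0, then Ω(|x·y|) ≥ 2, where Ω denotes the number of prime factors counted with multiplicity; in other words, |x·y| is neither 1 nor a prime. -/
lemma resolvent_aux_s9 (p : ℕ) (hp : p.Prime) (a b : ℤ)
    (h : a.natAbs * b.natAbs = p) :
    (a ^ 2 = 1 ∧ b ^ 2 = (p : ℤ) ^ 2) ∨ (a ^ 2 = (p : ℤ) ^ 2 ∧ b ^ 2 = 1) := by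
  have hsq : ∀ c : ℤ, (c ^ 2 : ℤ) = (c.natAbs : ℤ) ^ 2 := fun c => by
    rw [← Int.abs_eq_natAbs, sq_abs]
  have ha : a.natAbs ∣ p := ⟨b.natAbs, h.symm⟩
  rcases hp.eq_one_or_self_of_dvd _ ha with h1 | h1
  · left
    have hb : b.natAbs = p := by rwa [h1, one_mul] at h
    constructor
    · rw [hsq a, h1]; norm_num
    · rw [hsq b, hb]
  · right
    have hb : b.natAbs = 1 := by
      rw [h1] at h
      exact Nat.eq_of_mul_eq_mul_left hp.pos (by rw [mul_one]; exact h)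
    constructor
    · rw [hsq a, h1]
    · rw [hsq b, hb]; norm_num

theorem resolvent_Omega_ge_two
    (x y x' y' : ℤ)
    (h1 : x ^ 2 - y ^ 2 = x' ^ 2 + y' ^ 2)
    (h2 : x * y = x' * y')
    (h3 : Int.gcd x y = 1)
    (h4 : Int.gcd x' y' = 1)
    (hxy : x * y ≠ 0) :
    2 ≤ (x * y).natAbs.primeFactorsList.length := by
  by_contra hlt
  push_neg at hlt
  set n := (x * y).natAbs with hn
  have hn0 : n ≠ 0 := Int.natAbs_ne_zero.mpr hxy
  have hprod := Nat.prod_primeFactorsList hn0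
  rcases hL : n.primeFactorsList with _ | ⟨p, _ | ⟨q, t⟩⟩
  · -- n = 1
    rw [hL] at hprod
    simp at hprod
    have hx1 : x.natAbs = 1 ∧ y.natAbs = 1 := by
      have : x.natAbs * y.natAbs = 1 := by
        rw [← Int.natAbs_mul]; omega
      exact ⟨Nat.eq_one_of_mul_eq_one_right this,
             Nat.eq_one_of_mul_eq_one_left this⟩
    have hxs : x ^ 2 = 1 := by
      rw [← sq_abs, Int.abs_eq_natAbs, hx1.1]; norm_num
    have hys : y ^ 2 = 1 := by
      rw [← sq_abs, Int.abs_eq_natAbs, hx1.2]; norm_num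
    have hx'0 : x' = 0 := by nlinarith [sq_nonneg x', sq_nonneg y']
    have hy'0 : y' = 0 := by nlinarith [sq_nonneg x', sq_nonneg y']
    rw [hx'0, hy'0] at h4
    simp at h4
  · -- n = p prime
    have hp : p.Prime := Nat.prime_of_mem_primeFactorsList (by rw [hL]; simp)
    rw [hL] at hprod
    simp at hprod
    have hxyp : x.natAbs * y.natAbs = p := by rw [← Int.natAbs_mul]; omega
    have hxyp' : x'.natAbs * y'.natAbs = p := by
      rw [← Int.natAbs_mul, ← h2]; omega
    have hp2 : (2 : ℤ) ≤ (p : ℤ) := by exact_mod_cast hp.two_le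
    rcases resolvent_aux_s9 p hp x y hxyp with ⟨ha, hb⟩ | ⟨ha, hb⟩ <;>
      rcases resolvent_aux_s9 p hp x' y' hxyp' with ⟨ha', hb'⟩ | ⟨ha', hb'⟩ <;>
      nlinarith [sq_nonneg ((p : ℤ))]
  · rw [hL] at hlt
    simp at hlt
end

section
/- If X, Y, X', Y' are positive integers with X·Y = X'·Y', gcd(X,Y) = 1, gcd(X',Y') = 1, X² − Y² = X'² + Y'², and gcd(Y,Y') is even, then gcd(X,Y')² = gcd(X,X')² + gcd(Y,Y')² and gcd(X',Y)² = gcd(X,X')² − gcd(Y,Y')². -/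
theorem odd_of_dvd_odd {m n : ℕ} (h : m ∣ n) (hn : Odd n) : Odd m := by
  rcases Nat.even_or_odd m with he | ho
  · exfalso
    have h2 : 2 ∣ n := dvd_trans (even_iff_two_dvd.1 he) h
    have := Nat.odd_iff.1 hn
    omega
  · exact ho


theorem gcd_pythagorean_split
    (X Y X' Y' : ℕ)
    (hX : 0 < X) (hY : 0 < Y) (hX' : 0 < X') (hY' : 0 < Y')
    (hprod : X * Y = X' * Y')
    (h1 : Nat.gcd X Y = 1)
    (h2 : Nat.gcd X' Y' = 1)
    (heq : (X : ℤ) ^ 2 - (Y : ℤ) ^ 2 = (X' : ℤ) ^ 2 + (Y' : ℤ) ^ 2)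
    (heven : Even (Nat.gcd Y Y')) :
    Nat.gcd X Y' ^ 2 = Nat.gcd X X' ^ 2 + Nat.gcd Y Y' ^ 2 ∧
    (Nat.gcd X' Y : ℤ) ^ 2 = (Nat.gcd X X' : ℤ) ^ 2 - (Nat.gcd Y Y' : ℤ) ^ 2 := by
  set a := Nat.gcd X X' with ha
  set b := Nat.gcd X Y' with hb
  set c := Nat.gcd X' Y with hc
  set d := Nat.gcd Y Y' with hd
  -- factorizations
  have hXab : a * b = X :=
    (Nat.gcd_mul_gcd_eq_iff_dvd_mul_of_coprime h2).2 ⟨Y, hprod.symm⟩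
  have hYcd : c * d = Y := by
    have : Nat.gcd Y X' * Nat.gcd Y Y' = Y :=
      (Nat.gcd_mul_gcd_eq_iff_dvd_mul_of_coprime h2).2 ⟨X, by linarith [hprod]⟩
    rwa [Nat.gcd_comm Y X'] at this
  have hX'ac : a * c = X' := by
    have : Nat.gcd X' X * Nat.gcd X' Y = X' :=
      (Nat.gcd_mul_gcd_eq_iff_dvd_mul_of_coprime h1).2 ⟨Y', hprod⟩
    rwa [Nat.gcd_comm X' X] at this
  have hY'bd : b * d = Y' := by
    have : Nat.gcd Y' X * Nat.gcd Y' Y = Y' :=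
      (Nat.gcd_mul_gcd_eq_iff_dvd_mul_of_coprime h1).2 ⟨X', by linarith [hprod]⟩
    rwa [Nat.gcd_comm Y' X, Nat.gcd_comm Y' Y] at this
  -- positivity
  have hdpos : 0 < d := Nat.gcd_pos_of_pos_left _ hY
  have hapos : 0 < a := Nat.gcd_pos_of_pos_left _ hX
  have hbpos : 0 < b := Nat.gcd_pos_of_pos_left _ hX
  have hcpos : 0 < c := Nat.gcd_pos_of_pos_right _ hY
  -- coprimality
  have had : Nat.Coprime a d :=
    Nat.Coprime.coprime_dvd_left (Nat.gcd_dvd_left X X')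
      (Nat.Coprime.coprime_dvd_right (Nat.gcd_dvd_left Y Y') h1)
  have hbc : Nat.Coprime b c :=
    Nat.Coprime.coprime_dvd_left (Nat.gcd_dvd_left X Y')
      (Nat.Coprime.coprime_dvd_right (Nat.gcd_dvd_right X' Y) h1)
  -- parity
  have hYeven : Even Y := (even_iff_two_dvd.2 ((even_iff_two_dvd.1 heven).trans (Nat.gcd_dvd_left Y Y')))
  have hY'even : Even Y' := (even_iff_two_dvd.2 ((even_iff_two_dvd.1 heven).trans (Nat.gcd_dvd_right Y Y')))
  have hXodd : Odd X := by
    rcases Nat.even_or_odd X with h | h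
    · exfalso
      have : 2 ∣ Nat.gcd X Y := Nat.dvd_gcd (even_iff_two_dvd.1 h) (even_iff_two_dvd.1 hYeven)
      omega
    · exact h
  have hX'odd : Odd X' := by
    rcases Nat.even_or_odd X' with h | h
    · exfalso
      have : 2 ∣ Nat.gcd X' Y' := Nat.dvd_gcd (even_iff_two_dvd.1 h) (even_iff_two_dvd.1 hY'even)
      omega
    · exact h
  have haodd : Odd a := odd_of_dvd_odd (Nat.gcd_dvd_left X X') hXodd
  have hbodd : Odd b := odd_of_dvd_odd (Nat.gcd_dvd_left X Y') hXodd
  have hcodd : Odd c := odd_of_dvd_odd (Nat.gcd_dvd_left X' Y) hX'odd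
  -- key integer equation
  rw [← hXab, ← hYcd, ← hX'ac, ← hY'bd] at heq
  push_cast at heq
  have key : (a:ℤ)^2 * ((b:ℤ)^2 - (c:ℤ)^2) = (d:ℤ)^2 * ((b:ℤ)^2 + (c:ℤ)^2) := by
    linear_combination heq
  have hadZ : IsCoprime ((a:ℤ)^2) ((d:ℤ)^2) := (Nat.Coprime.isCoprime had).pow
  have hdvd : (a:ℤ)^2 ∣ (d:ℤ)^2 * ((b:ℤ)^2 + (c:ℤ)^2) := ⟨(b:ℤ)^2 - (c:ℤ)^2, key.symm⟩
  obtain ⟨k, hk⟩ := hadZ.dvd_of_dvd_mul_left hdvd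
  have haZ : ((a:ℤ)) ≠ 0 := by exact_mod_cast hapos.ne'
  have hkpos : 0 < k := by
    have h0 : (0:ℤ) < (a:ℤ)^2 * k := by
      rw [← hk]; positivity
    nlinarith [sq_nonneg ((a:ℤ))]
  have hD : (b:ℤ)^2 - (c:ℤ)^2 = (d:ℤ)^2 * k := by
    have h2 : (a:ℤ)^2 * ((b:ℤ)^2 - (c:ℤ)^2) = (a:ℤ)^2 * ((d:ℤ)^2 * k) := by
      linear_combination key + (d:ℤ)^2 * hk
    exact mul_left_cancel₀ (pow_ne_zero 2 haZ) h2
  have hbcZ : IsCoprime ((b:ℤ)^2) ((c:ℤ)^2) := (Nat.Coprime.isCoprime hbc).pow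
  obtain ⟨u, v, huv⟩ := hbcZ
  have hk2 : k ∣ 2 := by
    have d1 : k ∣ 2*(b:ℤ)^2 := ⟨(a:ℤ)^2+(d:ℤ)^2, by linear_combination hk + hD⟩
    have d2 : k ∣ 2*(c:ℤ)^2 := ⟨(a:ℤ)^2-(d:ℤ)^2, by linear_combination hk - hD⟩
    have hsum : k ∣ u*(2*(b:ℤ)^2) + v*(2*(c:ℤ)^2) :=
      dvd_add (d1.mul_left u) (d2.mul_left v)
    have h2eq : u*(2*(b:ℤ)^2) + v*(2*(c:ℤ)^2) = 2 := by linear_combination 2*huv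
    rwa [h2eq] at hsum
  have hkle : k ≤ 2 := Int.le_of_dvd (by norm_num) hk2
  have hk12 : k = 1 ∨ k = 2 := by omega
  have hbZodd : Odd ((b:ℤ)^2) := ((Int.odd_coe_nat b).2 hbodd).pow
  have hcZodd : Odd ((c:ℤ)^2) := ((Int.odd_coe_nat c).2 hcodd).pow
  have haZodd : Odd ((a:ℤ)^2) := ((Int.odd_coe_nat a).2 haodd).pow
  rcases hk12 with rfl | rfl
  · exfalso
    have heS : Even ((b:ℤ)^2 + (c:ℤ)^2) := hbZodd.add_odd hcZodd
    rw [hk, mul_one] at heS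
    exact (Int.not_odd_iff_even.2 heS) haZodd
  · constructor
    · have hgoal : ((b:ℤ))^2 = (a:ℤ)^2 + (d:ℤ)^2 := by linarith
      exact_mod_cast hgoal
    · linarith
end

section
/- The equation x⁴ − y⁴ = z² with the constraint gcd(x,y) = 1 has only trivial solutions over the integers: every integer solution (x, y, z) with gcd(x,y) = 1 satisfies y·z = 0. -/
private lemma zmod8_aux : ∀ a b c : ZMod 8, (2*a)^4 - (2*b+1)^4 ≠ c^2 := by decide

private lemma coprime_of_sq (u v : ℤ) (h : IsCoprime (u^2) (v^2)) : Int.gcd u v = 1 := by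
  have h1 : Int.gcd (u^2) (v^2) = 1 := Int.isCoprime_iff_gcd_eq_one.mp h
  have h2 : Nat.gcd (u.natAbs ^ 2) (v.natAbs ^ 2) = 1 := by
    simpa [Int.gcd, Int.natAbs_pow] using h1
  have h3 : Nat.Coprime (u.natAbs) (v.natAbs) :=
    (Nat.coprime_pow_right_iff (by norm_num : 0 < 2) _ _).mp
      ((Nat.coprime_pow_left_iff (by norm_num : 0 < 2) _ _).mp h2)
  exact h3

private lemma pos_sq' {a b c : ℤ} (h : IsCoprime a b) (heq : a * b = c^2) (ha : 0 < a) :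
    ∃ u, 0 ≤ u ∧ a = u^2 := by
  obtain ⟨u, hu | hu⟩ := Int.sq_of_isCoprime h heq
  · exact ⟨|u|, abs_nonneg u, by rw [sq_abs]; exact hu⟩
  · exfalso; nlinarith [sq_nonneg u]

private lemma natAbs_lt_of_sq_lt {u X : ℤ} (h : u^2 < X^2) :
    u.natAbs < X.natAbs := by
  have h1 : |u| < |X| := by nlinarith [abs_nonneg u, abs_nonneg X, sq_abs u, sq_abs X]
  zify
  simpa using h1

private lemma bound_helper {m n X u : ℤ} (hm : 0 < m) (hn : 0 < n) (hX : 0 < X)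
    (hmu : m = u^2) (hX3 : X = m^2 + n^2) : u^2 < X^2 := by
  have h1 : u^2 < X := by nlinarith
  nlinarith

private lemma even_sq {a : ℤ} (h : Even a) : Even (a^2) := by
  obtain ⟨r, hr⟩ := h; exact ⟨2*r^2, by rw [hr]; ring⟩

set_option maxHeartbeats 1000000 in
private lemma descent : ∀ (N : ℕ) (x y z : ℤ), x.natAbs = N → Int.gcd x y = 1 →
    x ^ 4 - y ^ 4 = z ^ 2 → y * z = 0 := by
  intro N
  induction N using Nat.strong_induction_on with
  | _ N IH =>
  intro x y z hxn hgcd heq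
  by_contra hyz
  rw [mul_eq_zero] at hyz
  push_neg at hyz
  obtain ⟨hy, hz⟩ := hyz
  have hx : x ≠ 0 := by
    rintro rfl
    have h4 : (0:ℤ) < y^4 := by positivity
    have h5 : (0:ℤ) < z^2 := by positivity
    nlinarith
  set X := |x| with hXdef
  set Y := |y| with hYdef
  set Z := |z| with hZdef
  have hXpos : 0 < X := abs_pos.mpr hx
  have hYpos : 0 < Y := abs_pos.mpr hy
  have hZpos : 0 < Z := abs_pos.mpr hz
  have eX : X ^ 4 = x ^ 4 := by rw [hXdef, pow_abs, abs_of_nonneg (show (0:ℤ) ≤ x^4 by positivity)]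
  have eY : Y ^ 4 = y ^ 4 := by rw [hYdef, pow_abs, abs_of_nonneg (show (0:ℤ) ≤ y^4 by positivity)]
  have eZ : Z ^ 2 = z ^ 2 := by rw [hZdef, pow_abs, abs_of_nonneg (show (0:ℤ) ≤ z^2 by positivity)]
  have heqX : X ^ 4 - Y ^ 4 = Z ^ 2 := by rw [eX, eY, eZ]; exact heq
  have hgcdXY : Int.gcd X Y = 1 := by
    rw [hXdef, hYdef]
    simpa [Int.gcd, Int.natAbs_abs] using hgcd
  have hXN : X.natAbs = N := by rw [hXdef, Int.natAbs_abs, hxn]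
  have hYX2 : Y ^ 2 < X ^ 2 := by nlinarith [pow_pos hZpos 2, pow_pos hXpos 2, pow_pos hYpos 2]
  -- X must be odd
  have hXodd : Odd X := by
    rcases Int.even_or_odd X with hXe | h
    swap; · exact h
    exfalso
    have hYodd : Odd Y := by
      rcases Int.even_or_odd Y with hYe | h
      swap; · exact h
      exfalso
      have h2 : (2:ℤ) ∣ Int.gcd X Y := Int.dvd_coe_gcd hXe.two_dvd hYe.two_dvd
      rw [hgcdXY] at h2
      norm_num at h2
    obtain ⟨a, ha⟩ := hXe
    obtain ⟨b, hb⟩ := hYodd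
    refine zmod8_aux (a : ZMod 8) (b : ZMod 8) (Z : ZMod 8) ?_
    have h := congrArg (fun t : ℤ => (t : ZMod 8)) heqX
    rw [ha, hb] at h
    push_cast at h
    linear_combination h
  rcases Int.even_or_odd Y with hYe | hYo
  · -- Case B : Y even
    have hA : (0:ℤ) < X^2 - Y^2 := by linarith
    have hB : (0:ℤ) < X^2 + Y^2 := by positivity
    have hcop2 : IsCoprime (X^2) (Y^2) :=
      (Int.isCoprime_iff_gcd_eq_one.mpr hgcdXY).pow
    have hY2even : Even (Y^2) := by
      obtain ⟨r, hr⟩ := hYe; exact ⟨2*r^2, by rw [hr]; ring⟩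
    have hX2odd : Odd (X^2) := hXodd.pow
    have hABodd : Odd (X^2 - Y^2) := hX2odd.sub_even hY2even
    have hABcop : IsCoprime (X^2 - Y^2) (X^2 + Y^2) := by
      obtain ⟨c, d, hcd⟩ := hcop2
      have h2cop : IsCoprime (X^2 - Y^2) (2:ℤ) := by
        obtain ⟨e, he⟩ := hABodd
        exact ⟨1, -e, by linear_combination he⟩
      have key : IsCoprime (X^2-Y^2) ((c+d)*(X^2+Y^2) + (X^2-Y^2)*(c-d)) := by
        rw [show (c+d)*(X^2+Y^2) + (X^2-Y^2)*(c-d) = 2 from by linear_combination 2*hcd]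
        exact h2cop
      have h3 := key.add_mul_left_right (-(c-d))
      rw [show (c+d)*(X^2+Y^2) + (X^2-Y^2)*(c-d) + (X^2-Y^2)*(-(c-d))
          = (c+d)*(X^2+Y^2) from by ring] at h3
      exact h3.of_mul_right_right
    obtain ⟨b, hb0, hbsq⟩ := pos_sq' (c := Z) hABcop (by linear_combination heqX) hA
    obtain ⟨a, ha0, hasq⟩ := pos_sq' (c := Z) hABcop.symm (by linear_combination heqX) hB
    have hbne : b ≠ 0 := by rintro rfl; norm_num at hbsq; linarith
    have hane : a ≠ 0 := by rintro rfl; norm_num at hasq; nlinarith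
    have hbpos : 0 < b := lt_of_le_of_ne hb0 (Ne.symm hbne)
    have hapos : 0 < a := lt_of_le_of_ne ha0 (Ne.symm hane)
    have hba : b < a := by nlinarith [pow_pos hYpos 2]
    have haodd : Odd a := by
      have h1 : Odd (a^2) := by rw [← hasq]; exact hX2odd.add_even hY2even
      rcases Int.even_or_odd a with h | h
      · exact absurd h1 (Int.not_odd_iff_even.mpr (even_sq h))
      · exact h
    have hbodd : Odd b := by
      have h1 : Odd (b^2) := by rw [← hbsq]; exact hABodd
      rcases Int.even_or_odd b with h | h
      · exact absurd h1 (Int.not_odd_iff_even.mpr (even_sq h))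
      · exact h
    have habcop : IsCoprime a b := by
      have h1 : IsCoprime (a^2) (b^2) := by rw [← hasq, ← hbsq]; exact hABcop.symm
      exact Int.isCoprime_iff_gcd_eq_one.mpr (coprime_of_sq a b h1)
    obtain ⟨p, hp⟩ := haodd.add_odd hbodd
    obtain ⟨q, hq⟩ := haodd.sub_odd hbodd
    have hap : a = p + q := by linarith
    have hbp : b = p - q := by linarith
    have hppos : 0 < p := by linarith
    have hqpos : 0 < q := by linarith
    have hsum : p^2 + q^2 = X^2 := by
      have h2 : 2*(p^2+q^2) = 2*(X^2) := by
        linear_combination -hasq - hbsq - (a+p+q)*hap - (b+p-q)*hbp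
      exact mul_left_cancel₀ two_ne_zero h2
    obtain ⟨y1, hy1⟩ := hYe
    have hprod : p * q = 2 * y1^2 := by
      have h4 : 4*(p*q) = 4*(2*y1^2) := by
        linear_combination -hasq + hbsq - (a-b)*hp - 2*p*hq + 2*(Y+2*y1)*hy1
      exact mul_left_cancel₀ (by norm_num : (4:ℤ) ≠ 0) h4
    have hpqcop : IsCoprime p q := by
      obtain ⟨c2, d2, hcd2⟩ := habcop
      exact ⟨c2 + d2, c2 - d2, by linear_combination hcd2 - c2*hap - d2*hbp⟩
    obtain ⟨P, Q, hPQsum, hPQprod, hPQcop, hPpos, hQpos, hQe⟩ :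
        ∃ P Q : ℤ, P^2+Q^2 = X^2 ∧ P*Q = 2*y1^2 ∧ IsCoprime P Q ∧ 0 < P ∧ 0 < Q ∧ Even Q := by
      rcases Int.even_or_odd q with h | h
      · exact ⟨p, q, hsum, hprod, hpqcop, hppos, hqpos, h⟩
      · have hpe : Even p := by
          have hev : Even (p*q) := by rw [hprod]; exact ⟨y1^2, by ring⟩
          rcases Int.even_mul.mp hev with h' | h'
          · exact h'
          · exact absurd h' (Int.not_even_iff_odd.mpr h)
        exact ⟨q, p, by linear_combination hsum, by linear_combination hprod,
          hpqcop.symm, hqpos, hppos, hpe⟩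
    obtain ⟨r, hr⟩ := hQe
    have hrpos : 0 < r := by linarith
    have hPr : P * r = y1^2 := by
      have h2 : 2*(P*r) = 2*y1^2 := by linear_combination hPQprod - P*hr
      exact mul_left_cancel₀ two_ne_zero h2
    have hPrcop : IsCoprime P r := by
      have h1 : IsCoprime P (2*r) := by
        rw [show (2:ℤ)*r = Q from by linarith]; exact hPQcop
      exact h1.of_mul_right_right
    obtain ⟨s, hs0, hPs⟩ := pos_sq' (c := y1) hPrcop hPr hPpos
    obtain ⟨t, ht0, hrt⟩ := pos_sq' (c := y1) hPrcop.symm (by linear_combination hPr) hrpos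
    have hsne : s ≠ 0 := by rintro rfl; norm_num at hPs; linarith
    have htne : t ≠ 0 := by rintro rfl; norm_num at hrt; linarith
    have htriple : PythagoreanTriple (s^2) (2*t^2) X := by
      have h1 : s^2*(s^2) + (2*t^2)*(2*t^2) = X*X := by
        linear_combination hPQsum - (P+s^2)*hPs - (Q+2*t^2)*hr - 2*(Q+2*t^2)*hrt
      exact h1
    have hgcdst : Int.gcd (s^2) (2*t^2) = 1 := by
      have h1 : IsCoprime (s^2) ((2:ℤ)*t^2) := by
        rw [← hPs, show (2:ℤ)*t^2 = Q from by linarith]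
        exact hPQcop
      exact Int.isCoprime_iff_gcd_eq_one.mp h1
    have hPodd : Odd P := by
      rcases Int.even_or_odd P with h | h
      · exfalso
        have h2 : (2:ℤ) ∣ Int.gcd P Q := Int.dvd_coe_gcd h.two_dvd ⟨r, by linarith⟩
        rw [Int.isCoprime_iff_gcd_eq_one.mp hPQcop] at h2
        norm_num at h2
      · exact h
    have hparity : s^2 % 2 = 1 := Int.odd_iff.mp (by rw [← hPs]; exact hPodd)
    obtain ⟨m, n', hmn1, hmn2, hmn3, hmncop, _, hm0⟩ :=
      PythagoreanTriple.coprime_classification' htriple hgcdst hparity hXpos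
    have htmn : t^2 = m * n' := by
      have h2 : 2*(t^2) = 2*(m*n') := by linear_combination hmn2
      exact mul_left_cancel₀ two_ne_zero h2
    have ht2pos : 0 < t^2 := by positivity
    have hmpos : 0 < m := by
      rcases hm0.lt_or_eq with h | h
      · exact h
      · exfalso; rw [← h] at htmn; simp at htmn; exact htne htmn
    have hnpos : 0 < n' := by
      have h1 : 0 < m * n' := htmn ▸ ht2pos
      rcases mul_pos_iff.mp h1 with ⟨_, h2⟩ | ⟨h2, _⟩
      · exact h2
      · linarith
    have hmncop' : IsCoprime m n' := Int.isCoprime_iff_gcd_eq_one.mpr hmncop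
    obtain ⟨u, hu0, hmu⟩ := pos_sq' (c := t) hmncop' htmn.symm hmpos
    obtain ⟨v, hv0, hnv⟩ := pos_sq' (c := t) hmncop'.symm (by linear_combination -htmn) hnpos
    have huv : u^4 - v^4 = s^2 := by
      linear_combination -hmn1 - (m+u^2)*hmu + (n'+v^2)*hnv
    have hgcduv : Int.gcd u v = 1 := coprime_of_sq u v (by rw [← hmu, ← hnv]; exact hmncop')
    have hlt : u.natAbs < N := by
      rw [← hXN]
      apply natAbs_lt_of_sq_lt
      exact bound_helper hmpos hnpos hXpos hmu hmn3
    have hres := IH u.natAbs hlt u v s rfl hgcduv huv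
    rcases mul_eq_zero.mp hres with h | h
    · rw [h] at hnv; norm_num at hnv; linarith
    · exact hsne h
  · -- Case A : both odd
    have hEsum : Even (X^2 + Y^2) := (hXodd.pow).add_odd (hYo.pow)
    have hEdiff : Even (X^2 - Y^2) := (hXodd.pow).sub_odd (hYo.pow)
    obtain ⟨k, hk⟩ := hEsum
    obtain ⟨l, hl⟩ := hEdiff
    have hk2 : X^2 = k + l := by linarith
    have hl2 : Y^2 = k - l := by linarith
    have hZ4 : Z^2 = 4*(k*l) := by linear_combination -heqX + (X^2-Y^2)*hk + 2*k*hl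
    have hZe : Even Z := by
      rcases Int.even_or_odd Z with h | h
      · exact h
      exfalso
      obtain ⟨c, hc⟩ := h
      have h4 : 4 * (k*l) = 4 * (c^2 + c) + 1 := by
        linear_combination -hZ4 + (Z+2*c+1)*hc
      generalize k*l = M at h4
      generalize c^2 + c = K at h4
      omega
    obtain ⟨w, hw⟩ := hZe
    have hklw : k * l = w^2 := by
      have h4 : 4 * (k*l) = 4 * w^2 := by linear_combination -hZ4 + (Z+w+w)*hw
      exact mul_left_cancel₀ (by norm_num : (4:ℤ) ≠ 0) h4
    have hcop2 : IsCoprime (X^2) (Y^2) :=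
      (Int.isCoprime_iff_gcd_eq_one.mpr hgcdXY).pow
    have hkl : IsCoprime k l := by
      obtain ⟨c, d, hcd⟩ := hcop2
      exact ⟨c + d, c - d, by linear_combination hcd - c*hk2 - d*hl2⟩
    have hkpos : 0 < k := by nlinarith [pow_pos hXpos 2, pow_pos hYpos 2]
    have hlpos : 0 < l := by nlinarith
    obtain ⟨u, hu0, hu⟩ := pos_sq' hkl hklw hkpos
    obtain ⟨v, hv0, hv⟩ := pos_sq' (c := w) hkl.symm (by linear_combination hklw) hlpos
    subst hu
    subst hv
    have huv4 : u^4 - v^4 = (X*Y)^2 := by linear_combination -Y^2*hk2 - (u^2+v^2)*hl2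
    have hgcduv : Int.gcd u v = 1 := coprime_of_sq u v hkl
    have hlt : u.natAbs < N := by
      rw [← hXN]
      exact natAbs_lt_of_sq_lt (by nlinarith)
    have hres := IH u.natAbs hlt u v (X*Y) rfl hgcduv huv4
    rcases mul_eq_zero.mp hres with h | h
    · subst h
      norm_num at hl
      linarith
    · exact mul_ne_zero (ne_of_gt hXpos) (ne_of_gt hYpos) h

theorem quartic_x4_sub_y4_only_trivial
    (x y z : ℤ)
    (hgcd : Int.gcd x y = 1)
    (heq : x ^ 4 - y ^ 4 = z ^ 2) :
    y * z = 0 := descent x.natAbs x y z rfl hgcd heq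
end

section
/- The equation x⁴ + y⁴ = 2z² with the constraint gcd(x,y) = 1 has only trivial solutions over the integers: every integer solution (x, y, z) with gcd(x,y) = 1 satisfies x² = y². -/
lemma aux_coprime_add_sub (p q : ℤ) (h : Int.gcd p q = 1) (hodd : (p + q) % 2 = 1) :
    IsCoprime (p + q) (p - q) := by
  rw [Int.isCoprime_iff_gcd_eq_one]
  set g : ℕ := Int.gcd (p + q) (p - q) with hg
  have h1 : (g : ℤ) ∣ p + q := Int.gcd_dvd_left _ _
  have h2 : (g : ℤ) ∣ p - q := Int.gcd_dvd_right _ _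
  have h2p : (g : ℤ) ∣ 2 * p := by
    have := dvd_add h1 h2; rwa [show 2 * p = p + q + (p - q) by ring]
  have h2q : (g : ℤ) ∣ 2 * q := by
    have := dvd_sub h1 h2; rwa [show 2 * q = p + q - (p - q) by ring]
  have hdvd2 : (g : ℤ) ∣ 2 := by
    have hd := Int.dvd_coe_gcd h2p h2q
    rw [Int.gcd_mul_left, h, mul_one] at hd
    simpa using hd
  have hgnat : g ∣ 2 := by exact_mod_cast hdvd2
  have hodd' : ¬ (2 ∣ g) := by
    intro h2g
    have : (2 : ℤ) ∣ p + q := dvd_trans (by exact_mod_cast h2g) h1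
    omega
  rcases (Nat.dvd_prime Nat.prime_two).mp hgnat with h' | h'
  · exact h'
  · exact absurd (h' ▸ dvd_rfl) hodd'

lemma aux_odd_sq_sub (m n : ℤ)
    (h : m % 2 = 0 ∧ n % 2 = 1 ∨ m % 2 = 1 ∧ n % 2 = 0) : Odd (m ^ 2 - n ^ 2) := by
  rcases h with ⟨hm, hn⟩ | ⟨hm, hn⟩
  · obtain ⟨a, rfl⟩ : ∃ a, m = 2 * a := ⟨m / 2, by omega⟩
    obtain ⟨b, rfl⟩ : ∃ b, n = 2 * b + 1 := ⟨n / 2, by omega⟩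
    exact ⟨2 * a ^ 2 - 2 * b ^ 2 - 2 * b - 1, by ring⟩
  · obtain ⟨a, rfl⟩ : ∃ a, m = 2 * a + 1 := ⟨m / 2, by omega⟩
    obtain ⟨b, rfl⟩ : ∃ b, n = 2 * b := ⟨n / 2, by omega⟩
    exact ⟨2 * a ^ 2 + 2 * a - 2 * b ^ 2, by ring⟩

lemma aux_natAbs_le_sq (w : ℤ) (hw : w ≠ 0) : (w.natAbs : ℤ) ≤ w ^ 2 := by
  have h1 : 1 ≤ (w.natAbs : ℤ) := by exact_mod_cast Int.natAbs_pos.mpr hw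
  nlinarith [Int.natAbs_sq w]

lemma aux_abs_bound (p q : ℤ) (hp0 : p ≠ 0) (hq0 : q ≠ 0)
    (hpar : p % 2 = 0 ∧ q % 2 = 1 ∨ p % 2 = 1 ∧ q % 2 = 0) :
    |p| + |q| < p ^ 2 + q ^ 2 := by
  have hp1 : 1 ≤ |p| := Int.one_le_abs hp0
  have hq1 : 1 ≤ |q| := Int.one_le_abs hq0
  have h2 : 2 ≤ |p| ∨ 2 ≤ |q| := by
    rcases hpar with ⟨h1, h2⟩ | ⟨h1, h2⟩
    · left; rw [le_abs]; omega
    · right; rw [le_abs]; omega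
  have hsp : p ^ 2 = |p| ^ 2 := (sq_abs p).symm
  have hsq : q ^ 2 = |q| ^ 2 := (sq_abs q).symm
  rcases h2 with h | h <;> nlinarith [abs_nonneg p, abs_nonneg q]

set_option maxHeartbeats 1000000 in
/-- Descent step: a nontrivial solution of `a^4 - t^4 = u^2` yields a smaller one. -/
lemma aux_smaller (a t u : ℤ) (hg : Int.gcd a t = 1) (ht : t ≠ 0) (hu : u ≠ 0)
    (heq : a ^ 4 - t ^ 4 = u ^ 2) :
    ∃ a' t' u' : ℤ, a'.natAbs < a.natAbs ∧ Int.gcd a' t' = 1 ∧ t' ≠ 0 ∧ u' ≠ 0 ∧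
      a' ^ 4 - t' ^ 4 = u' ^ 2 := by
    have ha0 : a ≠ 0 := by
      rintro rfl
      have h3 : t ^ 4 ≠ 0 := pow_ne_zero 4 ht
      have h4 : 0 ≤ t ^ 4 := by positivity
      have h5 : 0 < t ^ 4 := lt_of_le_of_ne h4 (Ne.symm h3)
      norm_num at heq
      linarith [sq_nonneg u]
    have hcat : IsCoprime a t := Int.isCoprime_iff_gcd_eq_one.mpr hg
    have hctu : IsCoprime t u := by
      have h1 : IsCoprime t (a ^ 4) := hcat.symm.pow_right
      have h2 : IsCoprime t (a ^ 4 + t * (-(t ^ 3))) := h1.add_mul_left_right _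
      have h3 : a ^ 4 + t * (-(t ^ 3)) = u ^ 2 := by linear_combination heq
      rw [h3] at h2
      exact (IsCoprime.pow_right_iff (by norm_num)).mp h2
    have htu : Int.gcd (t ^ 2) u = 1 := Int.isCoprime_iff_gcd_eq_one.mp hctu.pow_left
    have htri : PythagoreanTriple (t ^ 2) u (a ^ 2) := by
      have h : t ^ 2 * t ^ 2 + u * u = a ^ 2 * (a ^ 2) := by linear_combination - heq
      exact h
    obtain ⟨m, n, hmn1, hz, hmn_gcd, hpar⟩ :=
      PythagoreanTriple.coprime_classification.mp ⟨htri, htu⟩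
    have ha2 : a ^ 2 = m ^ 2 + n ^ 2 := by
      rcases hz with hz | hz
      · exact hz
      · exfalso
        have h1 : a ^ 2 ≠ 0 := pow_ne_zero 2 ha0
        have h2 : 0 < a ^ 2 := lt_of_le_of_ne (sq_nonneg a) (Ne.symm h1)
        linarith [sq_nonneg m, sq_nonneg n]
    rcases Int.emod_two_eq a with hae | hao
    · rcases Int.emod_two_eq t with hte | hto
      · -- both even: contradicts gcd = 1
        have hda : (2 : ℤ) ∣ a := Int.dvd_of_emod_eq_zero hae
        have hdt : (2 : ℤ) ∣ t := Int.dvd_of_emod_eq_zero hte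
        have h1 : (2 : ℤ) ∣ (Int.gcd a t : ℤ) := Int.dvd_coe_gcd hda hdt
        rw [hg] at h1
        norm_num at h1
      · -- a even, t odd: impossible mod 16
        obtain ⟨g, hg16⟩ : ∃ g, a = 2 * g := ⟨a / 2, by omega⟩
        obtain ⟨l, hl⟩ : ∃ l, t = 2 * l + 1 := ⟨t / 2, by omega⟩
        have key : ∀ u g l : ZMod 16, u ^ 2 ≠ (2 * g) ^ 4 - (2 * l + 1) ^ 4 := by decide
        have h2 : ((2 * g : ℤ) ^ 4 - (2 * l + 1 : ℤ) ^ 4 : ℤ) = (u : ℤ) ^ 2 := by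
          rw [← hg16, ← hl]; exact heq
        have h3 := congrArg (fun r : ℤ => (r : ZMod 16)) h2
        push_cast at h3
        exact absurd h3.symm (key _ _ _)
    · rcases Int.emod_two_eq t with hte | hto
      · -- MAIN even case: a odd, t even
        rcases hmn1 with ⟨ht2, hu2⟩ | ⟨ht2, hu2⟩
        · -- t^2 = m^2 - n^2 : parity contradiction (t even)
          have hodd : Odd (m ^ 2 - n ^ 2) := aux_odd_sq_sub m n hpar
          have heven : Even (m ^ 2 - n ^ 2) := by
            rw [← ht2]
            obtain ⟨s, rfl⟩ : ∃ s, t = 2 * s := ⟨t / 2, by omega⟩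
            exact ⟨2 * s ^ 2, by ring⟩
          exact absurd hodd (Int.not_odd_iff_even.mpr heven)
        · -- t^2 = 2 m n, u = m^2 - n^2 : the descent
          have hm0 : m ≠ 0 := by
            intro h
            apply pow_ne_zero 2 ht
            rw [ht2, h]; ring
          have hn0 : n ≠ 0 := by
            intro h
            apply pow_ne_zero 2 ht
            rw [ht2, h]; ring
          have htri2 : PythagoreanTriple m n a := by
            have h : m * m + n * n = a * a := by linear_combination - ha2
            exact h
          obtain ⟨p, q, hpq1, hza, hpq_gcd, hpq_par⟩ :=
            PythagoreanTriple.coprime_classification.mp ⟨htri2, hmn_gcd⟩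
          have hprod : t ^ 2 = 4 * (p * q * ((p + q) * (p - q))) := by
            rcases hpq1 with ⟨hm, hn⟩ | ⟨hm, hn⟩ <;> rw [ht2, hm, hn] <;> ring
          have h2pq : 2 * p * q ≠ 0 ∧ p ^ 2 - q ^ 2 ≠ 0 := by
            rcases hpq1 with ⟨hm, hn⟩ | ⟨hm, hn⟩
            · exact ⟨hn ▸ hn0, hm ▸ hm0⟩
            · exact ⟨hm ▸ hm0, hn ▸ hn0⟩
          have hp0 : p ≠ 0 := fun h => h2pq.1 (by rw [h]; ring)
          have hq0 : q ≠ 0 := fun h => h2pq.1 (by rw [h]; ring)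
          have hsum0 : p + q ≠ 0 := fun h => h2pq.2 (by
            rw [show p ^ 2 - q ^ 2 = (p + q) * (p - q) from by ring, h]; ring)
          have hsub0 : p - q ≠ 0 := fun h => h2pq.2 (by
            rw [show p ^ 2 - q ^ 2 = (p + q) * (p - q) from by ring, h]; ring)
          obtain ⟨s, rfl⟩ : ∃ s, t = 2 * s := ⟨t / 2, by omega⟩
          have hs0 : s ≠ 0 := by intro h; apply ht; rw [h]; ring
          have hw : s ^ 2 = p * q * ((p + q) * (p - q)) := by
            have h4 : (4 : ℤ) * s ^ 2 = 4 * (p * q * ((p + q) * (p - q))) := by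
              linear_combination hprod
            linarith
          have hc_pq : IsCoprime p q := Int.isCoprime_iff_gcd_eq_one.mpr hpq_gcd
          have hc_p_sum : IsCoprime p (p + q) := by
            have h := hc_pq.add_mul_left_right 1
            rw [mul_one, add_comm] at h; exact h
          have hc_p_sub : IsCoprime p (p - q) := by
            have h := hc_pq.neg_right.add_mul_left_right 1
            rw [mul_one, neg_add_eq_sub] at h; exact h
          have hc_q_sum : IsCoprime q (p + q) := by
            have h := hc_pq.symm.add_mul_left_right 1
            rwa [mul_one] at h
          have hc_q_sub : IsCoprime q (p - q) := by
            have h := hc_pq.symm.add_mul_left_right (-1)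
            rw [show p + q * (-1) = p - q from by ring] at h; exact h
          have hoddsum : (p + q) % 2 = 1 := by omega
          have hc_sum_sub : IsCoprime (p + q) (p - q) :=
            aux_coprime_add_sub p q hpq_gcd hoddsum
          obtain ⟨e, he⟩ := Int.sq_of_isCoprime
            ((hc_p_sum.mul_right hc_p_sub).mul_left (hc_q_sum.mul_right hc_q_sub))
            (show p * q * ((p + q) * (p - q)) = s ^ 2 from by linear_combination - hw)
          obtain ⟨c, hc⟩ := Int.sq_of_isCoprime
            ((hc_p_sum.symm.mul_right hc_q_sum.symm).mul_right hc_sum_sub)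
            (show (p + q) * (p * q * (p - q)) = s ^ 2 from by linear_combination - hw)
          obtain ⟨d, hd⟩ := Int.sq_of_isCoprime
            ((hc_p_sub.symm.mul_right hc_q_sub.symm).mul_right hc_sum_sub.symm)
            (show (p - q) * (p * q * (p + q)) = s ^ 2 from by linear_combination - hw)
          have he0 : e ≠ 0 := by
            rintro rfl
            have h : p * q = 0 := by rcases he with h | h <;> simpa using h
            exact mul_ne_zero hp0 hq0 h
          have hc0 : c ≠ 0 := by
            rintro rfl
            have h : p + q = 0 := by rcases hc with h | h <;> simpa using h
            exact hsum0 h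
          have hd0 : d ≠ 0 := by
            rintro rfl
            have h : p - q = 0 := by rcases hd with h | h <;> simpa using h
            exact hsub0 h
          have hc4 : c ^ 4 = (p + q) ^ 2 := by rcases hc with h | h <;> rw [h] <;> ring
          have hd4 : d ^ 4 = (p - q) ^ 2 := by rcases hd with h | h <;> rw [h] <;> ring
          have hcd : Int.gcd c d = 1 := by
            rw [← Int.isCoprime_iff_gcd_eq_one]
            have h1 : IsCoprime (c ^ 2) (d ^ 2) := by
              rcases hc with h | h <;> rcases hd with h' | h' <;> rw [h, h'] at hc_sum_sub
              · exact hc_sum_sub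
              · exact (IsCoprime.neg_right_iff _ _).mp hc_sum_sub
              · exact (IsCoprime.neg_left_iff _ _).mp hc_sum_sub
              · exact (IsCoprime.neg_left_iff _ _).mp ((IsCoprime.neg_right_iff _ _).mp hc_sum_sub)
            exact (IsCoprime.pow_left_iff (by norm_num)).mp
              ((IsCoprime.pow_right_iff (by norm_num)).mp h1)
          -- measure
          have habs_a : (a.natAbs : ℤ) = p ^ 2 + q ^ 2 := by
            rw [Int.natCast_natAbs]
            rcases hza with h | h
            · rw [h]; exact abs_of_nonneg (by positivity)
            · rw [h, abs_neg]; exact abs_of_nonneg (by positivity)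
          have habs_c : |p + q| = c ^ 2 := by
            rcases hc with h | h
            · rw [h]; exact abs_of_nonneg (sq_nonneg c)
            · rw [h, abs_neg]; exact abs_of_nonneg (sq_nonneg c)
          have habs_d : |p - q| = d ^ 2 := by
            rcases hd with h | h
            · rw [h]; exact abs_of_nonneg (sq_nonneg d)
            · rw [h, abs_neg]; exact abs_of_nonneg (sq_nonneg d)
          have hbound : |p| + |q| < p ^ 2 + q ^ 2 := aux_abs_bound p q hp0 hq0 hpq_par
          have hclta : c.natAbs < a.natAbs := by
            have h1 : (c.natAbs : ℤ) ≤ c ^ 2 := aux_natAbs_le_sq c hc0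
            have h3 : |p + q| ≤ |p| + |q| := abs_add_le p q
            have h4 : (c.natAbs : ℤ) < (a.natAbs : ℤ) := by
              rw [habs_a]; rw [← habs_c] at h1; linarith
            exact_mod_cast h4
          have hdlta : d.natAbs < a.natAbs := by
            have h1 : (d.natAbs : ℤ) ≤ d ^ 2 := aux_natAbs_le_sq d hd0
            have h3 : |p - q| ≤ |p| + |q| := by
              have h := abs_add_le p (-q)
              rwa [abs_neg, ← sub_eq_add_neg] at h
            have h4 : (d.natAbs : ℤ) < (a.natAbs : ℤ) := by
              rw [habs_a]; rw [← habs_d] at h1; linarith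
            exact_mod_cast h4
          rcases he with he' | he'
          · exact ⟨c, d, 2 * e, hclta, hcd, hd0, mul_ne_zero two_ne_zero he0,
              by rw [show c ^ 4 = (p + q) ^ 2 from hc4, show d ^ 4 = (p - q) ^ 2 from hd4]
                 linear_combination 4 * he'⟩
          · exact ⟨d, c, 2 * e, hdlta, by rwa [Int.gcd_comm] at hcd, hc0,
              mul_ne_zero two_ne_zero he0,
              by rw [show d ^ 4 = (p - q) ^ 2 from hd4, show c ^ 4 = (p + q) ^ 2 from hc4]
                 linear_combination (-4) * he'⟩
      · -- odd case: a odd, t odd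
        rcases hmn1 with ⟨ht2, hu2⟩ | ⟨ht2, hu2⟩
        · -- t^2 = m^2 - n^2, u = 2 m n : descend
          have hn0 : n ≠ 0 := by
            intro h; apply hu; rw [hu2, h]; ring
          have hna : m.natAbs < a.natAbs := by
            have hn2 : 0 < n ^ 2 := lt_of_le_of_ne (sq_nonneg n) (Ne.symm (pow_ne_zero 2 hn0))
            have h1 : m ^ 2 < a ^ 2 := by linarith
            by_contra hcon
            push_neg at hcon
            have h2 : (a.natAbs : ℤ) ≤ (m.natAbs : ℤ) := by exact_mod_cast hcon
            have h3 : (a.natAbs : ℤ) ^ 2 ≤ (m.natAbs : ℤ) ^ 2 :=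
              pow_le_pow_left₀ (by positivity) h2 2
            rw [Int.natAbs_sq, Int.natAbs_sq] at h3
            linarith
          have hta : t * a ≠ 0 := mul_ne_zero ht ha0
          have heq2 : m ^ 4 - n ^ 4 = (t * a) ^ 2 := by
            linear_combination (-(m ^ 2 + n ^ 2)) * ht2 - t ^ 2 * ha2
          exact ⟨m, n, t * a, hna, hmn_gcd, hn0, hta, heq2⟩
        · -- t^2 = 2 m n : parity contradiction (t odd)
          have hodd : Odd (t ^ 2) := by
            obtain ⟨s, rfl⟩ : ∃ s, t = 2 * s + 1 := ⟨t / 2, by omega⟩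
            exact ⟨2 * s ^ 2 + 2 * s, by ring⟩
          have heven : Even (t ^ 2) := by rw [ht2]; exact ⟨m * n, by ring⟩
          exact absurd hodd (Int.not_odd_iff_even.mpr heven)

lemma aux_descent (B : ℕ) : ∀ a t u : ℤ, a.natAbs ≤ B → Int.gcd a t = 1 → t ≠ 0 → u ≠ 0 →
    a ^ 4 - t ^ 4 ≠ u ^ 2 := by
  induction B with
  | zero =>
    intro a t u haB hg ht hu heq
    have ha : a = 0 := by omega
    subst ha
    have h3 : t ^ 4 ≠ 0 := pow_ne_zero 4 ht
    have h4 : 0 ≤ t ^ 4 := by positivity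
    have h5 : 0 < t ^ 4 := lt_of_le_of_ne h4 (Ne.symm h3)
    norm_num at heq
    linarith [sq_nonneg u]
  | succ B ih =>
    intro a t u haB hg ht hu heq
    obtain ⟨a', t', u', hlt, hg', ht', hu', heq'⟩ := aux_smaller a t u hg ht hu heq
    exact ih a' t' u' (by omega) hg' ht' hu' heq'

theorem quartic_x4_add_y4_eq_2z2_only_trivial
    (x y z : ℤ)
    (hgcd : Int.gcd x y = 1)
    (heq : x ^ 4 + y ^ 4 = 2 * z ^ 2) :
    x ^ 2 = y ^ 2 := by
  -- x and y are both odd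
  have hxy_odd : x % 2 = 1 ∧ y % 2 = 1 := by
    rcases Int.emod_two_eq x with hx | hx <;> rcases Int.emod_two_eq y with hy | hy
    · exfalso
      have hdx : (2 : ℤ) ∣ x := Int.dvd_of_emod_eq_zero hx
      have hdy : (2 : ℤ) ∣ y := Int.dvd_of_emod_eq_zero hy
      have h1 : (2 : ℤ) ∣ (Int.gcd x y : ℤ) := Int.dvd_coe_gcd hdx hdy
      rw [hgcd] at h1
      norm_num at h1
    · exfalso
      obtain ⟨k, rfl⟩ : ∃ k, x = 2 * k := ⟨x / 2, by omega⟩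
      obtain ⟨l, rfl⟩ : ∃ l, y = 2 * l + 1 := ⟨y / 2, by omega⟩
      have h1 : (1 : ℤ) = 2 * (z ^ 2 - 8 * k ^ 4 - 8 * l ^ 4 - 16 * l ^ 3 - 12 * l ^ 2 - 4 * l) := by
        linear_combination heq
      have h2 : (2 : ℤ) ∣ 1 := ⟨_, h1⟩
      norm_num at h2
    · exfalso
      obtain ⟨k, rfl⟩ : ∃ k, y = 2 * k := ⟨y / 2, by omega⟩
      obtain ⟨l, rfl⟩ : ∃ l, x = 2 * l + 1 := ⟨x / 2, by omega⟩
      have h1 : (1 : ℤ) = 2 * (z ^ 2 - 8 * k ^ 4 - 8 * l ^ 4 - 16 * l ^ 3 - 12 * l ^ 2 - 4 * l) := by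
        linear_combination heq
      have h2 : (2 : ℤ) ∣ 1 := ⟨_, h1⟩
      norm_num at h2
    · exact ⟨hx, hy⟩
  obtain ⟨hxo, hyo⟩ := hxy_odd
  have hx0 : x ≠ 0 := by omega
  have hy0 : y ≠ 0 := by omega
  by_contra hne
  -- define p, q with x^2+y^2 = 2p, x^2-y^2 = 2q
  obtain ⟨p, hp⟩ : ∃ p, x ^ 2 + y ^ 2 = 2 * p := by
    obtain ⟨i, rfl⟩ : ∃ i, x = 2 * i + 1 := ⟨x / 2, by omega⟩
    obtain ⟨j, rfl⟩ : ∃ j, y = 2 * j + 1 := ⟨y / 2, by omega⟩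
    exact ⟨2 * i ^ 2 + 2 * i + 2 * j ^ 2 + 2 * j + 1, by ring⟩
  obtain ⟨q, hq⟩ : ∃ q, x ^ 2 - y ^ 2 = 2 * q := by
    obtain ⟨i, rfl⟩ : ∃ i, x = 2 * i + 1 := ⟨x / 2, by omega⟩
    obtain ⟨j, rfl⟩ : ∃ j, y = 2 * j + 1 := ⟨y / 2, by omega⟩
    exact ⟨2 * i ^ 2 + 2 * i - 2 * j ^ 2 - 2 * j, by ring⟩
  have hsum : p + q = x ^ 2 := by
    have h4 : (2 : ℤ) * (p + q) = 2 * x ^ 2 := by linear_combination -hp - hq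
    linarith
  have hsub : p - q = y ^ 2 := by
    have h4 : (2 : ℤ) * (p - q) = 2 * y ^ 2 := by linear_combination -hp + hq
    linarith
  have hz2 : p ^ 2 + q ^ 2 = z ^ 2 := by
    have h4 : (4 : ℤ) * (p ^ 2 + q ^ 2) = 4 * z ^ 2 := by
      linear_combination -(x ^ 2 + y ^ 2 + 2 * p) * hp - (x ^ 2 - y ^ 2 + 2 * q) * hq + 2 * heq
    linarith
  have hxy2 : p ^ 2 - q ^ 2 = (x * y) ^ 2 := by
    have h4 : (4 : ℤ) * (p ^ 2 - q ^ 2) = 4 * (x * y) ^ 2 := by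
      linear_combination -(x ^ 2 + y ^ 2 + 2 * p) * hp + (x ^ 2 - y ^ 2 + 2 * q) * hq
    linarith
  have hmain : p ^ 4 - q ^ 4 = (x * y * z) ^ 2 := by
    linear_combination (p ^ 2 + q ^ 2) * hxy2 + (x * y) ^ 2 * hz2
  -- gcd p q = 1
  have hgpq : Int.gcd p q = 1 := by
    have hcxy2 : Int.gcd (x ^ 2) (y ^ 2) = 1 := by
      have h1 : Nat.Coprime x.natAbs y.natAbs := hgcd
      have h2 : Nat.Coprime (x.natAbs ^ 2) (y.natAbs ^ 2) := Nat.Coprime.pow 2 2 h1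
      rw [Int.gcd, Int.natAbs_pow, Int.natAbs_pow]
      exact h2
    set g : ℕ := Int.gcd p q with hgdef
    have h1 : (g : ℤ) ∣ p := Int.gcd_dvd_left _ _
    have h2 : (g : ℤ) ∣ q := Int.gcd_dvd_right _ _
    have h3 : (g : ℤ) ∣ x ^ 2 := by rw [← hsum]; exact dvd_add h1 h2
    have h4 : (g : ℤ) ∣ y ^ 2 := by rw [← hsub]; exact dvd_sub h1 h2
    have h5 : (g : ℤ) ∣ (Int.gcd (x ^ 2) (y ^ 2) : ℤ) := Int.dvd_coe_gcd h3 h4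
    rw [hcxy2] at h5
    have h6 : g ∣ 1 := by exact_mod_cast h5
    exact Nat.dvd_one.mp h6
  -- q ≠ 0
  have hq0 : q ≠ 0 := by
    intro h
    apply hne
    rw [← hsum, ← hsub, h]; ring
  -- z ≠ 0
  have hz0 : z ≠ 0 := by
    intro h
    rw [h] at heq
    have h1 : x ^ 4 ≠ 0 := pow_ne_zero 4 hx0
    have h2 : 0 ≤ x ^ 4 := by positivity
    have h3 : 0 ≤ y ^ 4 := by positivity
    have h4 : 0 < x ^ 4 := lt_of_le_of_ne h2 (Ne.symm h1)
    nlinarith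
  have hu0 : x * y * z ≠ 0 := mul_ne_zero (mul_ne_zero hx0 hy0) hz0
  exact aux_descent p.natAbs p q (x * y * z) le_rfl hgpq hq0 hu0 hmain
end

section
/- The equation x⁴ − 6x²y² + y⁴ = z² with the constraint gcd(x,y) = 1 has only trivial solutions over the integers: every integer solution (x, y, z) with gcd(x,y) = 1 satisfies x·y = 0. -/
lemma gcd_sq_aux (a b c : ℤ) (hg : Int.gcd a b = 1) (heq : a ^ 4 = b ^ 4 + c ^ 2) :
    Int.gcd (b ^ 2) c = 1 := by
  by_contra H
  set g := Int.gcd (b ^ 2) c with hgdef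
  rcases Nat.eq_zero_or_pos g with h0 | hpos
  · have hb2 : b ^ 2 = 0 := Int.natAbs_eq_zero.mp (Nat.eq_zero_of_gcd_eq_zero_left h0)
    have hc : c = 0 := Int.natAbs_eq_zero.mp (Nat.eq_zero_of_gcd_eq_zero_right h0)
    have hb : b = 0 := sq_eq_zero_iff.mp hb2
    have ha : a = 0 := by
      have h4 : a ^ 4 = 0 := by rw [heq, hb, hc]; ring
      exact pow_eq_zero_iff (by norm_num) |>.mp h4
    rw [ha, hb] at hg; simp at hg
  · set p := g.minFac with hp
    have hpp : p.Prime := Nat.minFac_prime (by omega)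
    have hppz : Prime (p : ℤ) := Int.prime_iff_natAbs_prime.mpr (by simpa using hpp)
    have hpg : (p : ℤ) ∣ (g : ℤ) := Int.natCast_dvd_natCast.mpr (Nat.minFac_dvd g)
    have hpb2 : (p : ℤ) ∣ b ^ 2 := hpg.trans (Int.gcd_dvd_left _ _)
    have hpc : (p : ℤ) ∣ c := hpg.trans (Int.gcd_dvd_right _ _)
    have hpb : (p : ℤ) ∣ b := hppz.dvd_of_dvd_pow hpb2
    have hpa : (p : ℤ) ∣ a := by
      have h4 : (p : ℤ) ∣ a ^ 4 := by
        rw [heq]; exact dvd_add (dvd_pow hpb (by norm_num)) (dvd_pow hpc (by norm_num))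
      exact hppz.dvd_of_dvd_pow h4
    have hd : (p : ℤ) ∣ (Int.gcd a b : ℤ) := Int.dvd_coe_gcd hpa hpb
    rw [hg] at hd
    have h1 := Int.eq_one_of_dvd_one (by positivity) hd
    have : p = 1 := by exact_mod_cast h1
    exact hpp.one_lt.ne' this

lemma natAbs_lt_of_abs_lt {m a : ℤ} (ha : 0 ≤ a) (h : |m| < a) : m.natAbs < a.natAbs := by
  rw [Int.abs_eq_natAbs, ← Int.natAbs_of_nonneg ha] at h
  exact_mod_cast h

lemma pos_right_of_mul {m n : ℤ} (hm : 0 < m) (hmn : 0 < m * n) : 0 < n := by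
  rcases lt_trichotomy n 0 with h | h | h
  · exfalso; nlinarith
  · exfalso; rw [h, mul_zero] at hmn; exact lt_irrefl 0 hmn
  · exact h

lemma abs_le_sq_int (P : ℤ) : |P| ≤ P ^ 2 := by
  rcases eq_or_ne P 0 with h | h
  · simp [h]
  · have h1 : 1 ≤ |P| := Int.one_le_abs h
    nlinarith [sq_abs P]

lemma lt_sum_sq_int {p q a : ℤ} (hp : 0 < p) (hq : 0 < q) (h : a = p ^ 2 + q ^ 2) : p < a := by
  nlinarith

lemma lt_of_sq_lt_sq_int {m a : ℤ} (hm : 0 ≤ m) (ha : 0 ≤ a) (h : m ^ 2 < a ^ 2) : m < a := by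
  nlinarith

set_option maxHeartbeats 1000000 in
lemma no_f44_aux : ∀ N : ℕ, ∀ a b c : ℤ, a.natAbs = N → 0 < a → b ≠ 0 → c ≠ 0 →
    Int.gcd a b = 1 → a ^ 4 ≠ b ^ 4 + c ^ 2 := by
  intro N
  induction N using Nat.strong_induction_on with
  | _ N ih =>
  intro a b c hN ha hb hc hg heq
  have hb2pos : (0:ℤ) < b ^ 2 := by positivity
  -- a is odd
  have hao : a % 2 = 1 := by
    rcases Int.emod_two_eq a with h | h
    · exfalso
      have hbo : b % 2 = 1 := by
        rcases Int.emod_two_eq b with h' | h'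
        · have hd := Int.dvd_gcd (show (2:ℤ) ∣ a by omega) (show (2:ℤ) ∣ b by omega)
          rw [hg] at hd; norm_num at hd
        · exact h'
      obtain ⟨k, hk⟩ : ∃ k, a = 2 * k := ⟨a / 2, by omega⟩
      obtain ⟨l, hl⟩ : ∃ l, b = 2 * l + 1 := ⟨b / 2, by omega⟩
      have h16 : ((a : ZMod 16)) ^ 4 = (b : ZMod 16) ^ 4 + (c : ZMod 16) ^ 2 := by
        have := congrArg (fun t : ℤ => (t : ZMod 16)) heq
        push_cast at this; exact this
      rw [hk, hl] at h16
      push_cast at h16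
      have key : ∀ k l c : ZMod 16, (2 * k) ^ 4 ≠ (2 * l + 1) ^ 4 + c ^ 2 := by decide
      exact key k l c h16
    · exact h
  have hg2 : Int.gcd (b ^ 2) c = 1 := gcd_sq_aux a b c hg heq
  have ht : PythagoreanTriple (b ^ 2) c (a ^ 2) := by
    show b ^ 2 * b ^ 2 + c * c = a ^ 2 * (a ^ 2)
    linear_combination -heq
  rcases Int.emod_two_eq b with hbe | hbo
  · -- b even: the deep descent case
    have hco : c % 2 = 1 := by
      rcases Int.emod_two_eq c with h' | h'
      · exfalso
        obtain ⟨k, hk⟩ : ∃ k, a = 2 * k + 1 := ⟨a / 2, by omega⟩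
        obtain ⟨l, hl⟩ : ∃ l, b = 2 * l := ⟨b / 2, by omega⟩
        obtain ⟨j, hj⟩ : ∃ j, c = 2 * j := ⟨c / 2, by omega⟩
        have h2 : ((a : ZMod 2)) ^ 4 = (b : ZMod 2) ^ 4 + (c : ZMod 2) ^ 2 := by
          have := congrArg (fun t : ℤ => (t : ZMod 2)) heq
          push_cast at this; exact this
        rw [hk, hl, hj] at h2
        push_cast at h2
        have key : ∀ k l j : ZMod 2, (2 * k + 1) ^ 4 ≠ (2 * l) ^ 4 + (2 * j) ^ 2 := by decide
        exact key k l j h2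
      · exact h'
    have ht2 : PythagoreanTriple c (b ^ 2) (a ^ 2) := ht.symm
    have hg2' : Int.gcd c (b ^ 2) = 1 := by rw [Int.gcd_comm]; exact hg2
    obtain ⟨m, n, h1, h2, h3, hmn, hpar, hm0⟩ := ht2.coprime_classification' hg2' hco (by positivity)
    -- h1 : c = m²-n², h2 : b² = 2mn, h3 : a² = m²+n²
    have hmnpos : 0 < m * n := by
      have h2' : b ^ 2 = 2 * (m * n) := by linear_combination h2
      linarith
    have hmpos : 0 < m := by
      rcases hm0.lt_or_eq with h | h
      · exact h
      · exfalso; rw [← h] at hmnpos; simp at hmnpos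
    have hnpos : 0 < n := pos_right_of_mul hmpos hmnpos
    obtain ⟨b1, hb1⟩ : ∃ t, b = 2 * t := ⟨b / 2, by omega⟩
    have hmncop : IsCoprime m n := Int.isCoprime_iff_gcd_eq_one.mpr hmn
    rcases hpar with ⟨hme, hno⟩ | ⟨hmo, hne⟩
    · -- m even, n odd
      obtain ⟨m1, hm1⟩ : ∃ t, m = 2 * t := ⟨m / 2, by omega⟩
      have hm1pos : 0 < m1 := by omega
      have hkey : m1 * n = b1 ^ 2 := by
        have h4 : 4 * (m1 * n) = 4 * b1 ^ 2 := by
          linear_combination -h2 + (b + 2 * b1) * hb1 + (-2 * n) * hm1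
        linarith
      have hc1 : IsCoprime m1 n := hmncop.of_isCoprime_of_dvd_left ⟨2, by omega⟩
      obtain ⟨s, hs⟩ := Int.sq_of_isCoprime hc1 hkey
      have hm1s : m1 = s ^ 2 := by
        rcases hs with h | h
        · exact h
        · exfalso; have := sq_nonneg s; linarith
      obtain ⟨t, htt⟩ := Int.sq_of_isCoprime hc1.symm (show n * m1 = b1 ^ 2 by linear_combination hkey)
      have hnt : n = t ^ 2 := by
        rcases htt with h | h
        · exact h
        · exfalso; have := sq_nonneg t; linarith
      have ht3 : PythagoreanTriple n m a := by
        show n * n + m * m = a * a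
        linear_combination -h3
      have hgnm : Int.gcd n m = 1 := by rw [Int.gcd_comm]; exact hmn
      obtain ⟨p, q, k1, k2, k3, hpq, hpqpar, hp0⟩ := ht3.coprime_classification' hgnm hno ha
      have hpqpos : 0 < p * q := by
        have k2' : m = 2 * (p * q) := by linear_combination k2
        linarith
      have hppos : 0 < p := by
        rcases hp0.lt_or_eq with h | h
        · exact h
        · exfalso; rw [← h] at hpqpos; simp at hpqpos
      have hqpos : 0 < q := pos_right_of_mul hppos hpqpos
      have hkey2 : p * q = s ^ 2 := by
        have h4 : 2 * (p * q) = 2 * s ^ 2 := by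
          linear_combination -k2 + hm1 + 2 * hm1s
        linarith
      have hpqcop : IsCoprime p q := Int.isCoprime_iff_gcd_eq_one.mpr hpq
      obtain ⟨P, hP⟩ := Int.sq_of_isCoprime hpqcop hkey2
      have hpP : p = P ^ 2 := by
        rcases hP with h | h
        · exact h
        · exfalso; have := sq_nonneg P; linarith
      obtain ⟨Q, hQ⟩ := Int.sq_of_isCoprime hpqcop.symm (show q * p = s ^ 2 by linear_combination hkey2)
      have hqQ : q = Q ^ 2 := by
        rcases hQ with h | h
        · exact h
        · exfalso; have := sq_nonneg Q; linarith
      have habs : |P| ^ 4 = P ^ 4 := by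
        rw [← abs_pow]; exact abs_of_nonneg (by positivity)
      have heq2 : |P| ^ 4 = Q ^ 4 + t ^ 2 := by
        linear_combination habs + (-(p + P ^ 2)) * hpP + (q + Q ^ 2) * hqQ - k1 + hnt
      have hQ0 : Q ≠ 0 := by intro h; rw [h] at hqQ; simp at hqQ; omega
      have ht0 : t ≠ 0 := by intro h; rw [h] at hnt; simp at hnt; omega
      have hP0 : P ≠ 0 := by intro h; rw [h] at hpP; simp at hpP; omega
      have habs_pos : 0 < |P| := abs_pos.mpr hP0
      have hcPQ : IsCoprime P Q := by
        rw [hpP, hqQ] at hpqcop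
        exact (hpqcop.of_isCoprime_of_dvd_left (dvd_pow_self P two_ne_zero)).of_isCoprime_of_dvd_right
          (dvd_pow_self Q two_ne_zero)
      have hgPQ : Int.gcd |P| Q = 1 := by
        have hh : Int.gcd |P| Q = Int.gcd P Q := by unfold Int.gcd; rw [Int.natAbs_abs]
        rw [hh]; exact Int.isCoprime_iff_gcd_eq_one.mp hcPQ
      have hlt : |P| < a := by
        have ha2 : |P| ≤ p := by rw [hpP]; exact abs_le_sq_int P
        have ha3 : p < a := lt_sum_sq_int hppos hqpos k3
        linarith
      have hltN : |P|.natAbs < N := by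
        rw [← hN]; exact natAbs_lt_of_abs_lt ha.le (by rwa [abs_abs])
      exact ih |P|.natAbs hltN |P| Q t rfl habs_pos hQ0 ht0 hgPQ heq2
    · -- m odd, n even
      obtain ⟨n1, hn1⟩ : ∃ t, n = 2 * t := ⟨n / 2, by omega⟩
      have hn1pos : 0 < n1 := by omega
      have hkey : m * n1 = b1 ^ 2 := by
        have h4 : 4 * (m * n1) = 4 * b1 ^ 2 := by
          linear_combination -h2 + (b + 2 * b1) * hb1 + (-2 * m) * hn1
        linarith
      have hc1 : IsCoprime m n1 := hmncop.of_isCoprime_of_dvd_right ⟨2, by omega⟩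
      obtain ⟨s, hs⟩ := Int.sq_of_isCoprime hc1 hkey
      have hms : m = s ^ 2 := by
        rcases hs with h | h
        · exact h
        · exfalso; have := sq_nonneg s; linarith
      obtain ⟨t, htt⟩ := Int.sq_of_isCoprime hc1.symm (show n1 * m = b1 ^ 2 by linear_combination hkey)
      have hn1t : n1 = t ^ 2 := by
        rcases htt with h | h
        · exact h
        · exfalso; have := sq_nonneg t; linarith
      have ht3 : PythagoreanTriple m n a := by
        show m * m + n * n = a * a
        linear_combination -h3
      obtain ⟨p, q, k1, k2, k3, hpq, hpqpar, hp0⟩ := ht3.coprime_classification' hmn hmo ha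
      have hpqpos : 0 < p * q := by
        have k2' : n = 2 * (p * q) := by linear_combination k2
        linarith
      have hppos : 0 < p := by
        rcases hp0.lt_or_eq with h | h
        · exact h
        · exfalso; rw [← h] at hpqpos; simp at hpqpos
      have hqpos : 0 < q := pos_right_of_mul hppos hpqpos
      have hkey2 : p * q = t ^ 2 := by
        have h4 : 2 * (p * q) = 2 * t ^ 2 := by
          linear_combination -k2 + hn1 + 2 * hn1t
        linarith
      have hpqcop : IsCoprime p q := Int.isCoprime_iff_gcd_eq_one.mpr hpq
      obtain ⟨P, hP⟩ := Int.sq_of_isCoprime hpqcop hkey2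
      have hpP : p = P ^ 2 := by
        rcases hP with h | h
        · exact h
        · exfalso; have := sq_nonneg P; linarith
      obtain ⟨Q, hQ⟩ := Int.sq_of_isCoprime hpqcop.symm (show q * p = t ^ 2 by linear_combination hkey2)
      have hqQ : q = Q ^ 2 := by
        rcases hQ with h | h
        · exact h
        · exfalso; have := sq_nonneg Q; linarith
      have habs : |P| ^ 4 = P ^ 4 := by
        rw [← abs_pow]; exact abs_of_nonneg (by positivity)
      have heq2 : |P| ^ 4 = Q ^ 4 + s ^ 2 := by
        linear_combination habs + (-(p + P ^ 2)) * hpP + (q + Q ^ 2) * hqQ - k1 + hms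
      have hQ0 : Q ≠ 0 := by intro h; rw [h] at hqQ; simp at hqQ; omega
      have hs0 : s ≠ 0 := by intro h; rw [h] at hms; simp at hms; omega
      have hP0 : P ≠ 0 := by intro h; rw [h] at hpP; simp at hpP; omega
      have habs_pos : 0 < |P| := abs_pos.mpr hP0
      have hcPQ : IsCoprime P Q := by
        rw [hpP, hqQ] at hpqcop
        exact (hpqcop.of_isCoprime_of_dvd_left (dvd_pow_self P two_ne_zero)).of_isCoprime_of_dvd_right
          (dvd_pow_self Q two_ne_zero)
      have hgPQ : Int.gcd |P| Q = 1 := by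
        have hh : Int.gcd |P| Q = Int.gcd P Q := by unfold Int.gcd; rw [Int.natAbs_abs]
        rw [hh]; exact Int.isCoprime_iff_gcd_eq_one.mp hcPQ
      have hlt : |P| < a := by
        have ha2 : |P| ≤ p := by rw [hpP]; exact abs_le_sq_int P
        have ha3 : p < a := lt_sum_sq_int hppos hqpos k3
        linarith
      have hltN : |P|.natAbs < N := by
        rw [← hN]; exact natAbs_lt_of_abs_lt ha.le (by rwa [abs_abs])
      exact ih |P|.natAbs hltN |P| Q s rfl habs_pos hQ0 hs0 hgPQ heq2
  · -- b odd: easy descent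
    have hb2o : b ^ 2 % 2 = 1 := by
      obtain ⟨k, hk⟩ : ∃ k, b = 2 * k + 1 := ⟨b / 2, by omega⟩
      have : b ^ 2 = 2 * (2 * k ^ 2 + 2 * k) + 1 := by rw [hk]; ring
      omega
    obtain ⟨m, n, h1, h2, h3, hmn, hpar, hm0⟩ := ht.coprime_classification' hg2 hb2o (by positivity)
    -- h1 : b² = m²-n², h2 : c = 2mn, h3 : a² = m²+n²
    have hn0 : n ≠ 0 := by
      intro h; apply hc; rw [h2, h]; ring
    have hmpos : 0 < m := by
      rcases hm0.lt_or_eq with h | h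
      · exact h
      · exfalso
        have h5 : b ^ 2 = -n ^ 2 := by rw [h1, ← h]; ring
        have := sq_nonneg n
        linarith
    have heq' : m ^ 4 = n ^ 4 + (a * b) ^ 2 := by
      linear_combination (-(m ^ 2 - n ^ 2)) * h3 + (-(a ^ 2)) * h1
    have hlt : m.natAbs < N := by
      have hmlt : m < a := by
        apply lt_of_sq_lt_sq_int hm0 ha.le
        have hn2 : 0 < n ^ 2 := by positivity
        linarith
      have : |m| < a := by rw [abs_of_nonneg hm0]; exact hmlt
      rw [← hN]; exact natAbs_lt_of_abs_lt ha.le this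
    exact ih m.natAbs hlt m n (a * b) rfl hmpos hn0 (mul_ne_zero ha.ne' hb) hmn heq'

lemma no_f44 (a b c : ℤ) (hb : b ≠ 0) (hc : c ≠ 0) (hg : Int.gcd a b = 1) :
    a ^ 4 ≠ b ^ 4 + c ^ 2 := by
  intro heq
  rcases lt_trichotomy a 0 with h | h | h
  · have hg' : Int.gcd (-a) b = 1 := by rwa [Int.neg_gcd]
    exact no_f44_aux (-a).natAbs (-a) b c rfl (by omega) hb hc hg' (by linear_combination heq)
  · rw [h] at heq
    have hb4 : 0 < b ^ 4 := by positivity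
    have hc2 : 0 < c ^ 2 := by positivity
    norm_num at heq
    linarith
  · exact no_f44_aux a.natAbs a b c rfl h hb hc hg heq

theorem quartic_x4_sub_6x2y2_add_y4_only_trivial
    (x y z : ℤ)
    (hgcd : Int.gcd x y = 1)
    (heq : x ^ 4 - 6 * x ^ 2 * y ^ 2 + y ^ 4 = z ^ 2) :
    x * y = 0 := by
  by_contra hxy
  have hx : x ≠ 0 := fun h => hxy (by rw [h]; ring)
  have hy : y ≠ 0 := fun h => hxy (by rw [h]; ring)
  have hpar : x % 2 = 1 ∧ y % 2 = 0 ∨ x % 2 = 0 ∧ y % 2 = 1 := by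
    rcases Int.emod_two_eq x with hx2 | hx2 <;> rcases Int.emod_two_eq y with hy2 | hy2
    · exfalso
      have hd := Int.dvd_gcd (show (2:ℤ) ∣ x by omega) (show (2:ℤ) ∣ y by omega)
      rw [hgcd] at hd; norm_num at hd
    · right; exact ⟨hx2, hy2⟩
    · left; exact ⟨hx2, hy2⟩
    · exfalso
      obtain ⟨k, hk⟩ : ∃ k, x = 2 * k + 1 := ⟨x / 2, by omega⟩
      obtain ⟨l, hl⟩ : ∃ l, y = 2 * l + 1 := ⟨y / 2, by omega⟩
      have h16 : ((x : ZMod 16)) ^ 4 - 6 * (x : ZMod 16) ^ 2 * (y : ZMod 16) ^ 2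
          + (y : ZMod 16) ^ 4 = (z : ZMod 16) ^ 2 := by
        have := congrArg (fun t : ℤ => (t : ZMod 16)) heq
        push_cast at this; exact this
      rw [hk, hl] at h16; push_cast at h16
      have key : ∀ k l z : ZMod 16,
          (2*k+1) ^ 4 - 6 * (2*k+1) ^ 2 * (2*l+1) ^ 2 + (2*l+1) ^ 4 ≠ z ^ 2 := by decide
      exact key k l _ h16
  have hz : z ≠ 0 := by
    intro h
    rw [h] at heq
    have h2 : ((x : ZMod 2)) ^ 4 - 6 * (x : ZMod 2) ^ 2 * (y : ZMod 2) ^ 2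
        + (y : ZMod 2) ^ 4 = ((0:ℤ) : ZMod 2) ^ 2 := by
      have := congrArg (fun t : ℤ => (t : ZMod 2)) heq
      push_cast at this
      push_cast
      exact this
    rcases hpar with ⟨hx2, hy2⟩ | ⟨hx2, hy2⟩
    · obtain ⟨k, hk⟩ : ∃ k, x = 2 * k + 1 := ⟨x / 2, by omega⟩
      obtain ⟨l, hl⟩ : ∃ l, y = 2 * l := ⟨y / 2, by omega⟩
      rw [hk, hl] at h2; push_cast at h2
      have key : ∀ k l : ZMod 2,
          (2*k+1) ^ 4 - 6 * (2*k+1) ^ 2 * (2*l) ^ 2 + (2*l) ^ 4 ≠ 0 := by decide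
      exact key k l (by simpa using h2)
    · obtain ⟨k, hk⟩ : ∃ k, x = 2 * k := ⟨x / 2, by omega⟩
      obtain ⟨l, hl⟩ : ∃ l, y = 2 * l + 1 := ⟨y / 2, by omega⟩
      rw [hk, hl] at h2; push_cast at h2
      have key : ∀ k l : ZMod 2,
          (2*k) ^ 4 - 6 * (2*k) ^ 2 * (2*l+1) ^ 2 + (2*l+1) ^ 4 ≠ 0 := by decide
      exact key k l (by simpa using h2)
  -- x² - y² is odd
  have hodd : (x ^ 2 - y ^ 2) % 2 = 1 := by
    rcases hpar with ⟨hx2, hy2⟩ | ⟨hx2, hy2⟩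
    · obtain ⟨k, hk⟩ : ∃ k, x = 2 * k + 1 := ⟨x / 2, by omega⟩
      obtain ⟨l, hl⟩ : ∃ l, y = 2 * l := ⟨y / 2, by omega⟩
      have : x ^ 2 - y ^ 2 = 2 * (2 * k ^ 2 + 2 * k - 2 * l ^ 2) + 1 := by rw [hk, hl]; ring
      omega
    · obtain ⟨k, hk⟩ : ∃ k, x = 2 * k := ⟨x / 2, by omega⟩
      obtain ⟨l, hl⟩ : ∃ l, y = 2 * l + 1 := ⟨y / 2, by omega⟩
      have : x ^ 2 - y ^ 2 = 2 * (2 * k ^ 2 - 2 * l ^ 2 - 2 * l - 1) + 1 := by rw [hk, hl]; ring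
      omega
  -- gcd (x²-y²) (2xy) = 1
  have hgg : Int.gcd (x ^ 2 - y ^ 2) (2 * x * y) = 1 := by
    by_contra H
    set g := Int.gcd (x ^ 2 - y ^ 2) (2 * x * y) with hgdef
    rcases Nat.eq_zero_or_pos g with h0 | hpos
    · have hd : x ^ 2 - y ^ 2 = 0 := Int.natAbs_eq_zero.mp (Nat.eq_zero_of_gcd_eq_zero_left h0)
      omega
    · set p := g.minFac with hp
      have hpp : p.Prime := Nat.minFac_prime (by omega)
      have hppz : Prime (p : ℤ) := Int.prime_iff_natAbs_prime.mpr (by simpa using hpp)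
      have hpg : (p : ℤ) ∣ (g : ℤ) := Int.natCast_dvd_natCast.mpr (Nat.minFac_dvd g)
      have hp1 : (p : ℤ) ∣ x ^ 2 - y ^ 2 := hpg.trans (Int.gcd_dvd_left _ _)
      have hp2 : (p : ℤ) ∣ 2 * x * y := hpg.trans (Int.gcd_dvd_right _ _)
      have hpne2 : (p : ℤ) ≠ 2 := by
        intro h2
        rw [h2] at hp1
        omega
      have hpxy : (p : ℤ) ∣ x * y := by
        rcases (hppz.dvd_mul).mp (by rwa [mul_assoc] at hp2) with h' | h'
        · exfalso
          have := Int.le_of_dvd (by norm_num) h'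
          have hge : 2 ≤ (p : ℤ) := by exact_mod_cast hpp.two_le
          have : (p : ℤ) = 2 := le_antisymm this hge
          exact hpne2 this
        · exact h'
      have hcontra : ∀ w v : ℤ, (p : ℤ) ∣ w → Int.gcd w v = 1 → (p : ℤ) ∣ v ^ 2 → False := by
        intro w v hw hwv hv2
        have hv : (p : ℤ) ∣ v := hppz.dvd_of_dvd_pow hv2
        have hd : (p : ℤ) ∣ (Int.gcd w v : ℤ) := Int.dvd_coe_gcd hw hv
        rw [hwv] at hd
        have h1 := Int.eq_one_of_dvd_one (by positivity) hd
        have : p = 1 := by exact_mod_cast h1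
        exact hpp.one_lt.ne' this
      rcases hppz.dvd_mul.mp hpxy with h' | h'
      · apply hcontra x y h' hgcd
        have hx2d : (p:ℤ) ∣ x ^ 2 := dvd_pow h' two_ne_zero
        have hd9 := dvd_sub hx2d hp1
        rwa [show x ^ 2 - (x ^ 2 - y ^ 2) = y ^ 2 from by ring] at hd9
      · apply hcontra y x h' (by rwa [Int.gcd_comm])
        have hy2d : (p:ℤ) ∣ y ^ 2 := dvd_pow h' two_ne_zero
        have hd9 := dvd_add hp1 hy2d
        rwa [show x ^ 2 - y ^ 2 + y ^ 2 = x ^ 2 from by ring] at hd9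
  -- apply Fermat
  have hmain := no_f44 (x ^ 2 - y ^ 2) (2 * x * y) (z * (x ^ 2 + y ^ 2))
    (fun h => hxy (by linarith))
    (mul_ne_zero hz (by positivity))
    hgg
  exact hmain (by linear_combination (x ^ 2 + y ^ 2) ^ 2 * heq)
end

section
/- The equation x⁴ − 4y⁴ = z² with the constraint gcd(x,y) = 1 has only trivial solutions over the integers: every integer solution (x, y, z) with gcd(x,y) = 1 satisfies y = 0. -/
theorem quartic_x4_sub_4y4_only_trivial
    (x y z : ℤ)
    (hgcd : Int.gcd x y = 1)
    (heq : x ^ 4 - 4 * y ^ 4 = z ^ 2) :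
    y = 0 := by
  by_contra hy
  have hco : IsCoprime x y := Int.isCoprime_iff_gcd_eq_one.mpr hgcd
  -- x is odd
  have hxodd : Odd x := by
    rcases Int.even_or_odd x with hx | hx
    · exfalso
      obtain ⟨k, hk⟩ := hx
      have hyodd : Odd y := by
        rcases Int.even_or_odd y with h2 | h2
        · exfalso
          obtain ⟨l, hl⟩ := h2
          have : IsUnit (2 : ℤ) :=
            hco.isUnit_of_dvd' ⟨k, by omega⟩ ⟨l, by omega⟩
          rw [Int.isUnit_iff] at this
          omega
        · exact h2
      obtain ⟨l, hl⟩ := hyodd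
      subst hk hl
      have hcast := congrArg (fun t : ℤ => (t : ZMod 16)) heq
      push_cast at hcast
      revert hcast
      have h16 : ∀ k l c : ZMod 16, ¬ ((k + k) ^ 4 - 4 * (2 * l + 1) ^ 4 = c ^ 2) := by
        decide
      exact h16 _ _ _
    · exact hx
  -- z is odd
  have hzodd : Odd z := by
    rcases Int.even_or_odd z with hz | hz
    · exfalso
      obtain ⟨w, hw⟩ := hz
      obtain ⟨k, hk⟩ := hxodd
      have : (2*k+1) ^ 4 - 4 * y ^ 4 = (w + w) ^ 2 := by rw [← hk, ← hw]; exact heq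
      have h2 : 16*(k^4+2*k^3) + 4*(6*k^2+2*k) + 1 - 4*y^4 = 4*w^2 := by
        nlinarith [this]
      have h4 : (4:ℤ) ∣ 1 - 4*y^4 - 4*w^2 + 16*(k^4+2*k^3) + 4*(6*k^2+2*k) := ⟨0, by linarith⟩
      obtain ⟨c, hc⟩ := h4
      omega
    · exact hz
  -- coprimality of z and 2*y^2
  have hzy : IsCoprime z y := by
    have h1 : IsCoprime (x ^ 4) y := hco.pow_left
    have h2 : IsCoprime (z ^ 2) y := by
      have := h1.add_mul_right_left (-4 * y ^ 3)
      have hrw : x ^ 4 + -4 * y ^ 3 * y = z ^ 2 := by linarith [heq]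
      rwa [hrw] at this
    exact (IsCoprime.pow_left_iff (by norm_num)).mp h2
  have hcoz : Int.gcd z (2 * y ^ 2) = 1 := by
    rw [← Int.isCoprime_iff_gcd_eq_one]
    have h2 : IsCoprime z 2 := by
      rw [Int.isCoprime_iff_gcd_eq_one]
      obtain ⟨w, hw⟩ := hzodd
      subst hw
      simp [Int.gcd]
    exact h2.mul_right ((hzy.pow_right (n := 2)))
  -- Pythagorean triple z, 2y², x²
  have htriple : PythagoreanTriple z (2 * y ^ 2) (x ^ 2) := by
    unfold PythagoreanTriple
    nlinarith [heq]
  have hzmod : z % 2 = 1 := Int.odd_iff.mp hzodd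
  have hxpos : 0 < x ^ 2 := by
    have : x ≠ 0 := by rintro rfl; exact (by decide : ¬ Odd (0:ℤ)) hxodd
    positivity
  obtain ⟨m, n, hz1, hy1, hx1, hmn, -, -⟩ :=
    htriple.coprime_classification' hcoz hzmod hxpos
  have hy2 : y ^ 2 = m * n := by linarith
  have hmn0 : m * n ≠ 0 := by
    rw [← hy2]; positivity
  obtain ⟨a, ha⟩ := Int.sq_of_gcd_eq_one hmn hy2.symm
  obtain ⟨b, hb⟩ := Int.sq_of_gcd_eq_one (by rwa [Int.gcd_comm] at hmn)
    (by rw [mul_comm] at hy2; exact hy2.symm)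
  have ha' : m ^ 2 = a ^ 4 := by rcases ha with h | h <;> rw [h] <;> ring
  have hb' : n ^ 2 = b ^ 4 := by rcases hb with h | h <;> rw [h] <;> ring
  have hane : a ≠ 0 := by
    rintro rfl
    rcases ha with h | h <;> simp [h] at hmn0
  have hbne : b ≠ 0 := by
    rintro rfl
    rcases hb with h | h <;> simp [h] at hmn0
  exact not_fermat_42 hane hbne (by rw [← ha', ← hb', ← hx1])
end

section
/- The equation x⁴ − y⁴ = 2z² with the constraint gcd(x,y) = 1 has only trivial solutions over the integers: every integer solution (x, y, z) with gcd(x,y) = 1 satisfies z = 0 (and hence x⁴ = y⁴). -/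
theorem quartic_x4_sub_y4_eq_2z2_only_trivial
    (x y z : ℤ)
    (hgcd : Int.gcd x y = 1)
    (heq : x ^ 4 - y ^ 4 = 2 * z ^ 2) :
    z = 0 := by
  by_contra hz
  -- x and y have the same parity since x^4 - y^4 is even
  have hpar : Odd x ∧ Odd y := by
    rcases Int.even_or_odd x with hx | hx <;> rcases Int.even_or_odd y with hy | hy
    · exfalso
      have h2 : (2 : ℤ) ∣ Int.gcd x y := Int.dvd_coe_gcd hx.two_dvd hy.two_dvd
      rw [hgcd] at h2
      norm_num at h2
    · exfalso
      have : Odd (x ^ 4 - y ^ 4) := by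
        have h1 : Even (x ^ 4) := (Int.even_pow' (by norm_num)).mpr hx
        have h2 : Odd (y ^ 4) := hy.pow
        simpa using h1.sub_odd h2
      rw [heq] at this
      exact (Int.not_odd_iff_even.mpr (even_two_mul _)) this
    · exfalso
      have : Odd (x ^ 4 - y ^ 4) := by
        have h1 : Odd (x ^ 4) := hx.pow
        have h2 : Even (y ^ 4) := (Int.even_pow' (by norm_num)).mpr hy
        simpa using h1.sub_even h2
      rw [heq] at this
      exact (Int.not_odd_iff_even.mpr (even_two_mul _)) this
    · exact ⟨hx, hy⟩
  obtain ⟨hx, hy⟩ := hpar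
  have hxne : x ≠ 0 := by rintro rfl; exact (Int.not_odd_iff_even.mpr Even.zero) hx
  have hyne : y ≠ 0 := by rintro rfl; exact (Int.not_odd_iff_even.mpr Even.zero) hy
  have hxy : x * y ≠ 0 := mul_ne_zero hxne hyne
  have heven : Even (x ^ 4 + y ^ 4) := Odd.add_odd hx.pow hy.pow
  obtain ⟨k, hk⟩ := heven
  have h4 : 4 * (z ^ 4 + (x * y) ^ 4) = 4 * k ^ 2 := by
    linear_combination (-(x ^ 4 - y ^ 4 + 2 * z ^ 2)) * heq + (x ^ 4 + y ^ 4 + k + k) * hk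
  have key : z ^ 4 + (x * y) ^ 4 = k ^ 2 := by linarith
  exact not_fermat_42 hz hxy key
end
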